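/- Let N be a set of ground closures with candidate interpretation R_*. Let (D·θ) = (D' ∨ t ≈ t' · θ) and (C·θ) be closures in N. If (D·θ) produces the rule tθ → t'θ of R_*, and tθ occurs in Cθ in a negative literal or below the top of a term in a positive literal, then (D·θ) ≪_{R_*} (C·θ) and Dθ ≺_C Cθ. -/

import Mathlib

/- Common infrastructure: first-order terms, clauses, ground rewrite systems,
   reduction orderings, the (Horn and non-Horn) R-normalization closure orderings,
   the Ground Closure (Horn) Superposition Calculus and its redundancy criterion,
   and the candidate interpretation construction, following Waldmann,
   "On the (In-)Completeness of Destructive Equality Resolution in the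
   Superposition Calculus". -/

set_option autoImplicit false
set_option maxHeartbeats 1000000

noncomputable section

/-- First-order terms over function symbols `F` and variables `V`. -/
inductive Trm (F V : Type) : Type
  | var : V → Trm F V
  | app : F → List (Trm F V) → Trm F V

namespace Trm
variable {F V : Type}

instance : DecidableEq (Trm F V) := Classical.decEq _

/-- Application of a substitution to a term. -/
def subst (θ : V → Trm F V) : Trm F V → Trm F V
  | var x => θ x
  | app f ts => app f (ts.attach.map fun t => subst θ t.1)
decreasing_by
  have := List.sizeOf_lt_of_mem t.2
  simp only [Trm.app.sizeOf_spec]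
  omega

/-- A term is ground if it contains no variables. -/
inductive IsGround : Trm F V → Prop
  | app {f : F} {ts : List (Trm F V)} : (∀ t ∈ ts, IsGround t) → IsGround (app f ts)

/-- The set of all subterms of a term (including the term itself). -/
def subterms : Trm F V → Finset (Trm F V)
  | var x => {var x}
  | app f ts => insert (app f ts) ((ts.attach.map fun t => subterms t.1).foldr (· ∪ ·) ∅)
decreasing_by
  have := List.sizeOf_lt_of_mem t.2
  simp only [Trm.app.sizeOf_spec]
  omega

/-- The set of proper subterms of a term (subterms at positions `> ε`). -/
def psubterms : Trm F V → Finset (Trm F V)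
  | var _ => ∅
  | app _ ts => (ts.map fun t => subterms t).foldr (· ∪ ·) ∅

end Trm

/-- Contexts: terms with exactly one hole. -/
inductive Ctx (F V : Type) : Type
  | hole : Ctx F V
  | app : F → List (Trm F V) → Ctx F V → List (Trm F V) → Ctx F V

/-- Filling the hole of a context with a term. -/
def Ctx.fill {F V : Type} : Ctx F V → Trm F V → Trm F V
  | .hole, t => t
  | .app f l c r, t => Trm.app f (l ++ c.fill t :: r)

variable {F V : Type}

/-- `RewAt R s t u root` holds iff `s` rewrites to `t` in one step using a rule of `R`
whose left-hand side is `u`, and `root = true` iff the rewrite position is `ε`. -/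
inductive RewAt (R : Set (Trm F V × Trm F V)) : Trm F V → Trm F V → Trm F V → Bool → Prop
  | root {u v : Trm F V} : (u, v) ∈ R → RewAt R u v u true
  | congr {t t' u : Trm F V} {b : Bool} {f : F} {l r : List (Trm F V)} :
      RewAt R t t' u b → RewAt R (.app f (l ++ t :: r)) (.app f (l ++ t' :: r)) u false

/-- One-step rewrite relation `s →_R t`. -/
def Step (R : Set (Trm F V × Trm F V)) (s t : Trm F V) : Prop := ∃ u b, RewAt R s t u b

/-- `t` is irreducible w.r.t. `R`. -/
def Irred (R : Set (Trm F V × Trm F V)) (t : Trm F V) : Prop := ∀ t', ¬ Step R t t'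

/-- `R` is left-reduced: the left-hand side of each rule is irreducible by the other rules. -/
def LeftReduced (R : Set (Trm F V × Trm F V)) : Prop := ∀ p ∈ R, Irred (R \ {p}) p.1

/-- A reduction ordering that is total on ground terms. -/
structure ReductionOrdering (F V : Type) where
  gt : Trm F V → Trm F V → Prop
  trans : ∀ {a b c : Trm F V}, gt a b → gt b c → gt a c
  wf : WellFounded fun a b : Trm F V => gt b a
  compat_ctx : ∀ {s t : Trm F V} (f : F) (l r : List (Trm F V)),
      gt s t → gt (.app f (l ++ s :: r)) (.app f (l ++ t :: r))
  compat_subst : ∀ {s t : Trm F V} (θ : V → Trm F V), gt s t → gt (s.subst θ) (t.subst θ)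
  total_ground : ∀ {s t : Trm F V}, s.IsGround → t.IsGround → s ≠ t → gt s t ∨ gt t s

/-- A left-reduced ground rewrite system contained in the reduction ordering `O`. -/
def GoodRS (O : ReductionOrdering F V) (R : Set (Trm F V × Trm F V)) : Prop :=
  LeftReduced R ∧ ∀ p ∈ R, p.1.IsGround ∧ p.2.IsGround ∧ O.gt p.1 p.2

/-- Reflexive-transitive rewriting to an `R`-normal form. -/
def ReachNF (R : Set (Trm F V × Trm F V)) (t t' : Trm F V) : Prop :=
  Relation.ReflTransGen (Step R) t t' ∧ Irred R t'

open Classical in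
/-- The `R`-normal form `t↓_R` of `t` (via choice; unique for terminating confluent `R`). -/
def nf (R : Set (Trm F V × Trm F V)) (t : Trm F V) : Trm F V :=
  if h : ∃ t', ReachNF R t t' then h.choose else t

/-- The graph of the labeled `R`-redex multiset function `rm_R(t,m)` of Definition 1:
`RM R t m S` holds iff `S` is a possible result of collecting the labeled redexes and
recursing along some `R`-normalization of `t`. -/
inductive RM (R : Set (Trm F V × Trm F V)) : Trm F V → ℕ → Multiset (Trm F V × ℕ) → Prop
  | irred {t : Trm F V} {m : ℕ} : Irred R t → RM R t m 0
  | step_top {t t' u : Trm F V} {b : Bool} {m : ℕ} {S : Multiset (Trm F V × ℕ)} :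
      RewAt R t t' u b → (b = true ∨ 0 < m) → RM R t' m S → RM R t m ((u, m) ::ₘ S)
  | step_deep {t t' u : Trm F V} {S : Multiset (Trm F V × ℕ)} :
      RewAt R t t' u false → RM R t' 0 S → RM R t 0 ((u, 1) ::ₘ S)

open Classical in
/-- The labeled `R`-redex multiset `rm_R(t,m)` (via choice; unique under the
hypotheses of Lemma 1). -/
def rm (R : Set (Trm F V × Trm F V)) (t : Trm F V) (m : ℕ) : Multiset (Trm F V × ℕ) :=
  if h : ∃ S, RM R t m S then h.choose else 0

/-- Equational literals. -/
inductive Lit (F V : Type) : Type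
  | pos : Trm F V → Trm F V → Lit F V
  | neg : Trm F V → Trm F V → Lit F V

instance : DecidableEq (Lit F V) := Classical.decEq _

def Lit.subst (θ : V → Trm F V) : Lit F V → Lit F V
  | .pos s t => .pos (s.subst θ) (t.subst θ)
  | .neg s t => .neg (s.subst θ) (t.subst θ)

def Lit.IsGround : Lit F V → Prop
  | .pos s t => s.IsGround ∧ t.IsGround
  | .neg s t => s.IsGround ∧ t.IsGround

def Lit.posQ : Lit F V → Bool
  | .pos _ _ => true
  | .neg _ _ => false

/-- A clause is a finite multiset of literals; `⊥` is the empty clause `0`. -/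
abbrev Clause (F V : Type) := Multiset (Lit F V)

def Clause.subst (θ : V → Trm F V) (C : Clause F V) : Clause F V := C.map (Lit.subst θ)

def Clause.IsGround (C : Clause F V) : Prop := ∀ L ∈ C, L.IsGround

/-- Horn clause: at most one positive literal. -/
def IsHorn (C : Clause F V) : Prop := Multiset.card (C.filter fun L => L.posQ = true) ≤ 1

/-- The (Dershowitz-Manna) multiset extension of a relation, `M` greater than `N`. -/
def MultGT {α : Type} (r : α → α → Prop) (M N : Multiset α) : Prop :=
  ∃ X Y Z, M = Z + X ∧ N = Z + Y ∧ X ≠ 0 ∧ ∀ y ∈ Y, ∃ x ∈ X, r x y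

/-- The multiset associated to a literal for the literal ordering. -/
def Lit.mset : Lit F V → Multiset (Trm F V)
  | .pos s t => {s, t}
  | .neg s t => {s, s, t, t}

/-- The literal ordering `≻_L`. -/
def litGT (O : ReductionOrdering F V) (L L' : Lit F V) : Prop := MultGT O.gt L.mset L'.mset

/-- The clause ordering `≻_C`. -/
def clauseGT (O : ReductionOrdering F V) (C D : Clause F V) : Prop := MultGT (litGT O) C D

/-- `L` is maximal w.r.t. the rest clause `D`. -/
def MaxIn (O : ReductionOrdering F V) (L : Lit F V) (D : Clause F V) : Prop :=
  ∀ L' ∈ D, ¬ litGT O L' L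

/-- `L` is strictly maximal w.r.t. the rest clause `D`. -/
def SMaxIn (O : ReductionOrdering F V) (L : Lit F V) (D : Clause F V) : Prop :=
  ∀ L' ∈ D, ¬ litGT O L' L ∧ L' ≠ L

section TermSets

def Lit.negSubs : Lit F V → Finset (Trm F V)
  | .neg s t => s.subterms ∪ t.subterms
  | .pos _ _ => ∅

def Lit.posPSubs : Lit F V → Finset (Trm F V)
  | .pos s t => s.psubterms ∪ t.psubterms
  | .neg _ _ => ∅

def Lit.posSubs : Lit F V → Finset (Trm F V)
  | .pos s t => s.subterms ∪ t.subterms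
  | .neg _ _ => ∅

def Lit.negTops : Lit F V → Finset (Trm F V)
  | .neg s t => {s, t}
  | .pos _ _ => ∅

def Lit.posTops : Lit F V → Finset (Trm F V)
  | .pos s t => {s, t}
  | .neg _ _ => ∅

def Lit.allSubs : Lit F V → Finset (Trm F V)
  | .pos s t => s.subterms ∪ t.subterms
  | .neg s t => s.subterms ∪ t.subterms

/-- `ss⁻(C)`: subterms of sides of negative literals. -/
def ssN (C : Clause F V) : Finset (Trm F V) := C.toFinset.sup Lit.negSubs
/-- `ss⁺_{>ε}(C)`: proper subterms of sides of positive literals. -/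
def ssPp (C : Clause F V) : Finset (Trm F V) := C.toFinset.sup Lit.posPSubs
/-- All subterms of sides of positive literals. -/
def ssP (C : Clause F V) : Finset (Trm F V) := C.toFinset.sup Lit.posSubs
/-- `ts⁻(C)`: sides of negative literals. -/
def tsN (C : Clause F V) : Finset (Trm F V) := C.toFinset.sup Lit.negTops
/-- `ts⁺(C)`: sides of positive literals. -/
def tsP (C : Clause F V) : Finset (Trm F V) := C.toFinset.sup Lit.posTops
/-- All subterms occurring in `C`. -/
def allSub (C : Clause F V) : Finset (Trm F V) := C.toFinset.sup Lit.allSubs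

/-- The labeled subterm set `lss(C)` of Definition 1. -/
def lss (C : Clause F V) : Finset (Trm F V × ℕ) :=
  (ssN C).image (fun t => (t, 2)) ∪ ((ssPp C \ ssN C).image fun t => (t, 1)) ∪
    ((tsP C \ (ssPp C ∪ ssN C)).image fun t => (t, 0))

/-- The labeled topterm set `lts(C)` of Definition 1. -/
def lts (C : Clause F V) : Finset (Trm F V × ℕ) :=
  (tsN C).image (fun t => (t, 2)) ∪ ((tsP C \ tsN C).image fun t => (t, 0))

end TermSets

/-- Contribution of one labeled subterm of `C` to `nm_R(C·θ)`. -/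
def nmElt (R : Set (Trm F V × Trm F V)) (θ : V → Trm F V) : Trm F V × ℕ → Multiset (Trm F V × ℕ)
  | (.var x, m) => rm R (θ x) m
  | (.app f ts, m) => rm R (.app f (ts.map fun t => nf R (t.subst θ))) m

/-- The `R`-normalization multiset `nm_R(C·θ)` of Definition 2 (Horn case). -/
def nm (R : Set (Trm F V × Trm F V)) (C : Clause F V) (θ : V → Trm F V) :
    Multiset (Trm F V × ℕ) :=
  (lss C).sum (nmElt R θ) + (lts C).sum fun p => {(nf R (p.1.subst θ), p.2)}

/-- A closure `(C·θ)`. -/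
abbrev Closure (F V : Type) := Clause F V × (V → Trm F V)

/-- The ground instance `Cθ` represented by a closure `(C·θ)`. -/
def Closure.inst (c : Closure F V) : Clause F V := Clause.subst c.2 c.1

def Closure.IsGround (c : Closure F V) : Prop := Clause.IsGround c.inst

/-- Equality of clauses up to bijective variable renaming. -/
def ClauseAlphaEq (C D : Clause F V) : Prop :=
  ∃ ρ : V ≃ V, Clause.subst (fun x => Trm.var (ρ x)) C = D

/-- Identification of closures: equal up to bijective renaming (with the same
ground instance). -/
def CloAlphaEq (c d : Closure F V) : Prop := ClauseAlphaEq c.1 d.1 ∧ c.inst = d.inst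

/-- The tie-breaking closure ordering `≻_Clo`: an arbitrary well-founded ordering on
ground closures, total on closures with the same ground instance, such that
`(C·θ₁) ≻_Clo (D·θ₂)` whenever `Cθ₁ = Dθ₂` and `D` is an instance of `C` but not
vice versa. -/
structure TieBreak (F V : Type) where
  gt : Closure F V → Closure F V → Prop
  wf : WellFounded fun a b : Closure F V => gt b a
  total : ∀ c d : Closure F V, c.inst = d.inst → CloAlphaEq c d ∨ gt c d ∨ gt d c
  inst_gt : ∀ c d : Closure F V, c.inst = d.inst →
      (∃ σ, Clause.subst σ c.1 = d.1) → (¬ ∃ σ, Clause.subst σ d.1 = c.1) → gt c d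

/-- Lexicographic combination of `≻` and `>` on labeled terms. -/
def lexGT (O : ReductionOrdering F V) (p q : Trm F V × ℕ) : Prop :=
  O.gt p.1 q.1 ∨ (p.1 = q.1 ∧ q.2 < p.2)

/-- The `R`-normalization closure ordering `≫_R` of Definition 2 (Horn case). -/
def cloGT (O : ReductionOrdering F V) (T : TieBreak F V) (R : Set (Trm F V × Trm F V))
    (c d : Closure F V) : Prop :=
  MultGT (lexGT O) (nm R c.1 c.2) (nm R d.1 d.2)
  ∨ (nm R c.1 c.2 = nm R d.1 d.2 ∧ clauseGT O c.inst d.inst)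
  ∨ (nm R c.1 c.2 = nm R d.1 d.2 ∧ c.inst = d.inst ∧ T.gt c d)

/-- Convertibility w.r.t. a set of ground equations: the congruence generated by `E`. -/
inductive Conv (E : Set (Trm F V × Trm F V)) : Trm F V → Trm F V → Prop
  | rel {s t : Trm F V} : (s, t) ∈ E → Conv E s t
  | refl (t : Trm F V) : Conv E t t
  | symm {s t : Trm F V} : Conv E s t → Conv E t s
  | trans {s t u : Trm F V} : Conv E s t → Conv E t u → Conv E s u
  | congr {t t' : Trm F V} {f : F} {l r : List (Trm F V)} :
      Conv E t t' → Conv E (.app f (l ++ t :: r)) (.app f (l ++ t' :: r))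

/-- Truth of a literal in the equality Herbrand interpretation generated by `E`. -/
def litTrue (E : Set (Trm F V × Trm F V)) : Lit F V → Prop
  | .pos s t => Conv E s t
  | .neg s t => ¬ Conv E s t

/-- Truth of a (ground) clause in the equality Herbrand interpretation generated by `E`. -/
def ModelsC (E : Set (Trm F V × Trm F V)) (D : Clause F V) : Prop := ∃ L ∈ D, litTrue E L

/-- `R ⊨ (C·θ)`. -/
def Models (E : Set (Trm F V × Trm F V)) (c : Closure F V) : Prop := ModelsC E c.inst

/-- `σ` is an idempotent most general unifier of `s` and `s'`. -/
def IsMGU (σ : V → Trm F V) (s s' : Trm F V) : Prop :=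
  s.subst σ = s'.subst σ ∧
  ∀ τ : V → Trm F V, s.subst τ = s'.subst τ → ∀ x, (σ x).subst τ = τ x

/-- Replacement of all occurrences of `u` by `v` in a term. -/
def replAll (u v : Trm F V) : Trm F V → Trm F V
  | .var x => if Trm.var x = u then v else .var x
  | .app f ts => if Trm.app f ts = u then v else .app f (ts.attach.map fun s => replAll u v s.1)
decreasing_by
  have := List.sizeOf_lt_of_mem s.2
  simp only [Trm.app.sizeOf_spec]
  omega

/-- Replacement of all occurrences of `u` by `v` in a clause. -/
def Clause.replAll (u v : Trm F V) (C : Clause F V) : Clause F V :=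
  C.map fun L => match L with
    | .pos s t => .pos (_root_.replAll u v s) (_root_.replAll u v t)
    | .neg s t => .neg (_root_.replAll u v s) (_root_.replAll u v t)

instance : DecidableEq V := Classical.decEq _

/-- Single-point substitution `{x ↦ t}`. -/
def single (x : V) (t : Trm F V) : V → Trm F V := fun y => if y = x then t else Trm.var y

/-- Ground inferences of the Ground Closure (Horn) Superposition Calculus.
`eqres` is Equality Resolution, `ps1` is Parallel Superposition I (overlap at a
non-variable position `u`), `ps2` is Parallel Superposition II (overlap at or below
a variable `x`, with `xθ = u[tθ]` for a context `u`). -/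
inductive GInf (F V : Type) : Type
  | eqres (C' : Clause F V) (s s' : Trm F V) (σ θ : V → Trm F V)
  | ps1 (D' : Clause F V) (t t' : Trm F V) (C : Clause F V) (u : Trm F V) (σ θ : V → Trm F V)
  | ps2 (D' : Clause F V) (t t' : Trm F V) (C : Clause F V) (x : V) (u : Ctx F V) (θ : V → Trm F V)

namespace GInf

/-- The conclusion of a ground inference. -/
def concl : GInf F V → Closure F V
  | .eqres C' _ _ σ θ => (Clause.subst σ C', θ)
  | .ps1 D' _ t' C u σ θ => (Clause.subst σ (D' + Clause.replAll u t' C), θ)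
  | .ps2 D' _ t' C x u θ => (D' + C, Function.update θ x (u.fill (t'.subst θ)))

/-- The right (or only) premise of a ground inference. -/
def rprem : GInf F V → Closure F V
  | .eqres C' s s' _ θ => (C' + {Lit.neg s s'}, θ)
  | .ps1 _ _ _ C _ _ θ => (C, θ)
  | .ps2 _ _ _ C _ _ θ => (C, θ)

/-- The left premise of a (Superposition) ground inference. -/
def lprem : GInf F V → Closure F V
  | .eqres C' s s' _ θ => (C' + {Lit.neg s s'}, θ)
  | .ps1 D' t t' _ _ _ θ => (D' + {Lit.pos t t'}, θ)
  | .ps2 D' t t' _ _ _ θ => (D' + {Lit.pos t t'}, θ)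

/-- The list of premises of a ground inference. -/
def prems : GInf F V → List (Closure F V)
  | .eqres C' s s' _ θ => [(C' + {Lit.neg s s'}, θ)]
  | .ps1 D' t t' C _ _ θ => [(D' + {Lit.pos t t'}, θ), (C, θ)]
  | .ps2 D' t t' C _ _ θ => [(D' + {Lit.pos t t'}, θ), (C, θ)]

/-- Is the inference a Superposition inference? -/
def IsSup : GInf F V → Prop
  | .eqres _ _ _ _ _ => False
  | .ps1 _ _ _ _ _ _ _ => True
  | .ps2 _ _ _ _ _ _ _ => True

/-- For a Superposition inference with left premise `(D' ∨ t ≈ t' · θ)`: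
the rule `tθ → t'θ` belongs to `R`. -/
def ruleIn (R : Set (Trm F V × Trm F V)) : GInf F V → Prop
  | .eqres _ _ _ _ _ => False
  | .ps1 _ t t' _ _ _ θ => (t.subst θ, t'.subst θ) ∈ R
  | .ps2 _ t t' _ _ _ θ => (t.subst θ, t'.subst θ) ∈ R

/-- Condition (iii) of Definition 5: a Superposition inference with left premise
`(D' ∨ t ≈ t' · θ)` such that `tθ ≻ t'θ` and `(tθ → t'θ) ∉ R`. -/
def ruleNotIn (O : ReductionOrdering F V) (R : Set (Trm F V × Trm F V)) : GInf F V → Prop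
  | .eqres _ _ _ _ _ => False
  | .ps1 _ t t' _ _ _ θ => O.gt (t.subst θ) (t'.subst θ) ∧ (t.subst θ, t'.subst θ) ∉ R
  | .ps2 _ t t' _ _ _ θ => O.gt (t.subst θ) (t'.subst θ) ∧ (t.subst θ, t'.subst θ) ∉ R

end GInf

/-- The common ordering side conditions of the Parallel Superposition rules, for a
left premise `D' ∨ t ≈ t'`, right premise `C`, overlapped term (or variable) `u`,
under the ground substitution `θ`. -/
def SideConds (O : ReductionOrdering F V) (D' : Clause F V) (t t' : Trm F V)
    (C : Clause F V) (u : Trm F V) (θ : V → Trm F V) : Prop :=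
  (u ∈ ssN C ∪ ssPp C →
     clauseGT O (Clause.subst θ C) (Clause.subst θ (D' + {Lit.pos t t'}))) ∧
  (∃ s s',
      (Lit.pos s s' ∈ C ∧ u ∈ s.subterms ∧ O.gt (s.subst θ) (s'.subst θ) ∧
        SMaxIn O (Lit.subst θ (Lit.pos s s')) (Clause.subst θ (C.erase (Lit.pos s s')))) ∨
      (Lit.neg s s' ∈ C ∧ u ∈ s.subterms ∧ O.gt (s.subst θ) (s'.subst θ) ∧
        MaxIn O (Lit.subst θ (Lit.neg s s')) (Clause.subst θ (C.erase (Lit.neg s s'))))) ∧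
  SMaxIn O (Lit.subst θ (Lit.pos t t')) (Clause.subst θ D') ∧
  O.gt (t.subst θ) (t'.subst θ)

/-- Validity of a ground inference: all side conditions of the corresponding rule of
the Ground Closure Horn Superposition Calculus hold. -/
def GInf.IsInf (O : ReductionOrdering F V) : GInf F V → Prop
  | .eqres C' s s' σ θ =>
      Closure.IsGround (C' + {Lit.neg s s'}, θ) ∧
      s.subst θ = s'.subst θ ∧ IsMGU σ s s' ∧
      MaxIn O (Lit.subst θ (Lit.neg s s')) (Clause.subst θ C')
  | .ps1 D' t t' C u σ θ =>
      Closure.IsGround (D' + {Lit.pos t t'}, θ) ∧ Closure.IsGround (C, θ) ∧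
      (¬ ∃ x, u = Trm.var x) ∧ t.subst θ = u.subst θ ∧ IsMGU σ t u ∧
      u ∈ allSub C ∧ SideConds O D' t t' C u θ
  | .ps2 D' t t' C x u θ =>
      Closure.IsGround (D' + {Lit.pos t t'}, θ) ∧ Closure.IsGround (C, θ) ∧
      Trm.var x ∈ allSub C ∧ θ x = u.fill (t.subst θ) ∧
      SideConds O D' t t' C (Trm.var x) θ

/-- Redundant closures (Definition 3). -/
def RedC (O : ReductionOrdering F V) (T : TieBreak F V) (N : Set (Closure F V))
    (c : Closure F V) : Prop :=
  ∀ R, GoodRS O R → Models R c ∨ ∃ d ∈ N, cloGT O T R c d ∧ ¬ Models R d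

/-- Redundant inferences (Definition 4). -/
def RedI (O : ReductionOrdering F V) (T : TieBreak F V) (N : Set (Closure F V))
    (ι : GInf F V) : Prop :=
  ∀ R, GoodRS O R →
    Models R ι.concl
    ∨ (∃ c ∈ N, cloGT O T R ι.rprem c ∧ ¬ Models R c)
    ∨ ι.ruleNotIn O R
    ∨ (ι.IsSup ∧ cloGT O T R ι.lprem ι.rprem)

section Candidate

/-- `s` is a strictly maximal term of the ground clause `D` and occurs in `D` only
(at the top) in positive literals. -/
def StrictMaxTermPos (O : ReductionOrdering F V) (D : Clause F V) (s : Trm F V) : Prop :=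
  (∀ w ∈ allSub D, w = s ∨ O.gt s w) ∧ s ∉ ssN D ∧ s ∉ ssPp D ∧ s ∈ tsP D

/-- The productivity conditions (Horn case) for the closure `(C' ∨ u ≈ u' · θ) ∈ N`
w.r.t. the partial interpretation `Rs`. -/
def ProdConds (O : ReductionOrdering F V) (N : Set (Closure F V))
    (Rs : Set (Trm F V × Trm F V)) (C' : Clause F V) (u u' : Trm F V)
    (θ : V → Trm F V) : Prop :=
  (C' + {Lit.pos u u'}, θ) ∈ N ∧
  Closure.IsGround (C' + {Lit.pos u u'}, θ) ∧
  StrictMaxTermPos O (Clause.subst θ (C' + {Lit.pos u u'})) (u.subst θ) ∧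
  Irred Rs (u.subst θ) ∧
  ¬ Models Rs (C' + {Lit.pos u u'}, θ) ∧
  O.gt (u.subst θ) (u'.subst θ)

/-- `(C' ∨ u ≈ u' · θ)` is the `≫_{Rs}`-smallest closure in `N` satisfying the
productivity conditions for the left-hand side `s`. -/
def ProducesFor (O : ReductionOrdering F V) (T : TieBreak F V) (N : Set (Closure F V))
    (Rs : Set (Trm F V × Trm F V)) (s : Trm F V) (C' : Clause F V) (u u' : Trm F V)
    (θ : V → Trm F V) : Prop :=
  u.subst θ = s ∧ ProdConds O N Rs C' u u' θ ∧
  ∀ D' v v' θ', v.subst θ' = s → ProdConds O N Rs D' v v' θ' →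
    (D' + {Lit.pos v v'}, θ') = (C' + {Lit.pos u u'}, θ) ∨
    cloGT O T Rs (D' + {Lit.pos v v'}, θ') (C' + {Lit.pos u u'}, θ)

/-- `R_s = ⋃_{t ≺ s} E_t`. -/
def Rbelow (O : ReductionOrdering F V) (E : Trm F V → Set (Trm F V × Trm F V))
    (s : Trm F V) : Set (Trm F V × Trm F V) :=
  { p | ∃ t, O.gt s t ∧ p ∈ E t }

/-- `R_* = ⋃_t E_t`. -/
def Rstar (E : Trm F V → Set (Trm F V × Trm F V)) : Set (Trm F V × Trm F V) :=
  { p | ∃ t, p ∈ E t }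

/-- `E` is the family of rule sets of the candidate interpretation constructed from `N`:
`E s = {s → u'θ}` for the `≫_{R_s}`-smallest productive closure for `s` if one
exists, and `E s = ∅` otherwise. -/
def IsCandidate (O : ReductionOrdering F V) (T : TieBreak F V) (N : Set (Closure F V))
    (E : Trm F V → Set (Trm F V × Trm F V)) : Prop :=
  ∀ s : Trm F V,
    (∃ C' u u' θ, ProducesFor O T N (Rbelow O E s) s C' u u' θ ∧
        E s = {(s, u'.subst θ)})
    ∨ ((¬ ∃ C' u u' θ, ProducesFor O T N (Rbelow O E s) s C' u u' θ) ∧ E s = ∅)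

/-- The closure `(C' ∨ u ≈ u' · θ)` produces the rule `uθ → u'θ` in the candidate
interpretation given by `E`. -/
def ProducesRule (O : ReductionOrdering F V) (T : TieBreak F V) (N : Set (Closure F V))
    (E : Trm F V → Set (Trm F V × Trm F V)) (C' : Clause F V) (u u' : Trm F V)
    (θ : V → Trm F V) : Prop :=
  ProducesFor O T N (Rbelow O E (u.subst θ)) (u.subst θ) C' u u' θ ∧
  E (u.subst θ) = {(u.subst θ, u'.subst θ)}

end Candidate

section NonHorn

/-- The graph of the (non-Horn) `R`-redex multiset function `rm_R(t)` of Definition 7. -/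
inductive RMn (R : Set (Trm F V × Trm F V)) :
    Trm F V → Multiset (Multiset (Trm F V)) → Prop
  | irred {t : Trm F V} : Irred R t → RMn R t 0
  | step {t t' u : Trm F V} {b : Bool} {S : Multiset (Multiset (Trm F V))} :
      RewAt R t t' u b → RMn R t' S → RMn R t (({u, u} : Multiset (Trm F V)) ::ₘ S)

open Classical in
/-- The (non-Horn) `R`-redex multiset `rm_R(t)` (via choice). -/
def rmN (R : Set (Trm F V × Trm F V)) (t : Trm F V) : Multiset (Multiset (Trm F V)) :=
  if h : ∃ S, RMn R t S then h.choose else 0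

/-- Contribution of one subterm of a negative literal to the non-Horn `nm_R(C·θ)`. -/
def nmNElt (R : Set (Trm F V × Trm F V)) (θ : V → Trm F V) :
    Trm F V → Multiset (Multiset (Trm F V))
  | .var x => rmN R (θ x)
  | .app f ts => rmN R (.app f (ts.map fun t => nf R (t.subst θ)))

/-- The non-Horn `R`-normalization multiset `nm_R(C·θ)` of Definition 8. -/
def nmN (R : Set (Trm F V × Trm F V)) (C : Clause F V) (θ : V → Trm F V) :
    Multiset (Multiset (Trm F V)) :=
  (ssN C).sum (nmNElt R θ) +
  (tsN C).sum (fun t => {({nf R (t.subst θ), nf R (t.subst θ)} : Multiset (Trm F V))}) +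
  (C.map fun L => match L with
     | .pos s s' => (({({s.subst θ, s'.subst θ} : Multiset (Trm F V))}) :
         Multiset (Multiset (Trm F V)))
     | .neg _ _ => 0).sum

/-- The non-Horn `R`-normalization closure ordering `≫_R` of Definition 8. -/
def cloGTN (O : ReductionOrdering F V) (T : TieBreak F V) (R : Set (Trm F V × Trm F V))
    (c d : Closure F V) : Prop :=
  MultGT (MultGT O.gt) (nmN R c.1 c.2) (nmN R d.1 d.2)
  ∨ (nmN R c.1 c.2 = nmN R d.1 d.2 ∧ clauseGT O c.inst d.inst)
  ∨ (nmN R c.1 c.2 = nmN R d.1 d.2 ∧ c.inst = d.inst ∧ T.gt c d)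

end NonHorn

section Lifting

/-- The set `G(N)` of ground closures of a set `N` of clauses. -/
def GClosures (N : Set (Clause F V)) : Set (Closure F V) :=
  { c | c.1 ∈ N ∧ c.IsGround }

/-- The ordering side conditions of the non-ground Parallel Superposition rule, for
left premise `D' ∨ t ≈ t'`, right premise `C`, overlapped non-variable subterm `u`,
and mgu `σ`. -/
def NGSideConds (O : ReductionOrdering F V) (D' : Clause F V) (t t' : Trm F V)
    (C : Clause F V) (u : Trm F V) (σ : V → Trm F V) : Prop :=
  (u ∈ ssN C ∪ ssPp C →
     ¬ (clauseGT O (Clause.subst σ (D' + {Lit.pos t t'})) (Clause.subst σ C) ∨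
        Clause.subst σ C = Clause.subst σ (D' + {Lit.pos t t'}))) ∧
  (∃ s s',
      (Lit.pos s s' ∈ C ∧ u ∈ s.subterms ∧
        ¬ (O.gt (s'.subst σ) (s.subst σ) ∨ s.subst σ = s'.subst σ) ∧
        SMaxIn O (Lit.subst σ (Lit.pos s s')) (Clause.subst σ (C.erase (Lit.pos s s')))) ∨
      (Lit.neg s s' ∈ C ∧ u ∈ s.subterms ∧
        ¬ (O.gt (s'.subst σ) (s.subst σ) ∨ s.subst σ = s'.subst σ) ∧
        MaxIn O (Lit.subst σ (Lit.neg s s')) (Clause.subst σ (C.erase (Lit.neg s s'))))) ∧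
  SMaxIn O (Lit.subst σ (Lit.pos t t')) (Clause.subst σ D') ∧
  ¬ (O.gt (t'.subst σ) (t.subst σ) ∨ t.subst σ = t'.subst σ)

/-- The ground inference `ι` is a ground instance of an inference of the
(non-ground) Horn Superposition Calculus with Parallel Superposition whose
premises are exactly the clauses occurring in the premise closures of `ι`. -/
def IsGroundInstOfNG (O : ReductionOrdering F V) : GInf F V → Prop
  | .eqres C' s s' σ _ =>
      IsMGU σ s s' ∧
      MaxIn O (Lit.subst σ (Lit.neg s s')) (Clause.subst σ C')
  | .ps1 D' t t' C u σ _ =>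
      (¬ ∃ x, u = Trm.var x) ∧ IsMGU σ t u ∧ u ∈ allSub C ∧
      NGSideConds O D' t t' C u σ
  | .ps2 _ _ _ _ _ _ _ => False

/-- Non-ground inferences of the Horn Superposition Calculus with Parallel
Superposition. -/
inductive NGInf (F V : Type) : Type
  | eqres (C' : Clause F V) (s s' : Trm F V) (σ : V → Trm F V)
  | psup (D' : Clause F V) (t t' : Trm F V) (C : Clause F V) (u : Trm F V) (σ : V → Trm F V)

namespace NGInf

/-- Side conditions of the non-ground rules. -/
def IsInf (O : ReductionOrdering F V) : NGInf F V → Prop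
  | .eqres C' s s' σ =>
      IsMGU σ s s' ∧ MaxIn O (Lit.subst σ (Lit.neg s s')) (Clause.subst σ C')
  | .psup D' t t' C u σ =>
      (¬ ∃ x, u = Trm.var x) ∧ IsMGU σ t u ∧ u ∈ allSub C ∧
      NGSideConds O D' t t' C u σ

/-- Premises of a non-ground inference. -/
def prems : NGInf F V → List (Clause F V)
  | .eqres C' s s' _ => [C' + {Lit.neg s s'}]
  | .psup D' t t' C _ _ => [D' + {Lit.pos t t'}, C]

/-- Conclusion of a non-ground inference. -/
def concl : NGInf F V → Clause F V
  | .eqres C' _ _ σ => Clause.subst σ C'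
  | .psup D' _ t' C u σ => Clause.subst σ (D' + Clause.replAll u t' C)

/-- The set `G(ι)` of ground instances of a non-ground inference. -/
def GInsts (O : ReductionOrdering F V) : NGInf F V → Set (GInf F V)
  | .eqres C' s s' σ => { g | ∃ θ, g = GInf.eqres C' s s' σ θ ∧ g.IsInf O }
  | .psup D' t t' C u σ => { g | ∃ θ, g = GInf.ps1 D' t t' C u σ θ ∧ g.IsInf O }

end NGInf

end Lifting


section Aux
variable {F V : Type}

/-! ### Term induction and subterm API -/

theorem Trm.ind' {motive : Trm F V → Prop} (hv : ∀ x, motive (.var x))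
    (ha : ∀ f ts, (∀ t ∈ ts, motive t) → motive (.app f ts)) : ∀ t, motive t := by
  have H : ∀ n (t : Trm F V), sizeOf t ≤ n → motive t := by
    intro n
    induction n with
    | zero =>
      intro t ht
      cases t with
      | var x => exact hv x
      | app f ts => exact absurd ht (by simp)
    | succ n ih =>
      intro t ht
      cases t with
      | var x => exact hv x
      | app f ts =>
        refine ha f ts fun s hs => ih s ?_
        have := List.sizeOf_lt_of_mem hs
        simp only [Trm.app.sizeOf_spec] at ht
        omega
  exact fun t => H (sizeOf t) t le_rfl

theorem subst_var (θ : V → Trm F V) (x : V) : (Trm.var x).subst θ = θ x := by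
  simp [Trm.subst]

theorem subst_app (θ : V → Trm F V) (f : F) (ts : List (Trm F V)) :
    (Trm.app f ts).subst θ = Trm.app f (ts.map (Trm.subst θ)) := by
  rw [Trm.subst]
  congr 1
  rw [List.map_congr_left (fun (t : {x // x ∈ ts}) _ => rfl)]
  exact (List.attach_map_val (l := ts) (f := Trm.subst θ)) ▸ rfl

theorem mem_foldr_union {α : Type} [DecidableEq α] (L : List (Finset α)) (x : α) :
    x ∈ L.foldr (· ∪ ·) ∅ ↔ ∃ s ∈ L, x ∈ s := by
  induction L with
  | nil => simp
  | cons a L ih => simp [ih]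

theorem mem_subterms_var (x : V) (u : Trm F V) :
    u ∈ (Trm.var x : Trm F V).subterms ↔ u = Trm.var x := by
  rw [Trm.subterms]; simp

theorem mem_subterms_app (f : F) (ts : List (Trm F V)) (u : Trm F V) :
    u ∈ (Trm.app f ts).subterms ↔ u = Trm.app f ts ∨ ∃ t ∈ ts, u ∈ t.subterms := by
  rw [Trm.subterms]
  simp only [Finset.mem_insert, mem_foldr_union, List.mem_map, List.mem_attach]
  constructor
  · rintro (h | ⟨s, ⟨⟨t, ht⟩, -, rfl⟩, hu⟩)
    · exact Or.inl h
    · exact Or.inr ⟨t, ht, hu⟩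
  · rintro (h | ⟨t, ht, hu⟩)
    · exact Or.inl h
    · exact Or.inr ⟨t.subterms, ⟨⟨t, ht⟩, by simp, rfl⟩, hu⟩

theorem psubterms_var (x : V) : (Trm.var x : Trm F V).psubterms = ∅ := by
  rw [Trm.psubterms]

theorem mem_psubterms_app (f : F) (ts : List (Trm F V)) (u : Trm F V) :
    u ∈ (Trm.app f ts).psubterms ↔ ∃ t ∈ ts, u ∈ t.subterms := by
  rw [Trm.psubterms]
  simp only [mem_foldr_union, List.mem_map]
  constructor
  · rintro ⟨s, ⟨t, ht, rfl⟩, hu⟩; exact ⟨t, ht, hu⟩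
  · rintro ⟨t, ht, hu⟩; exact ⟨t.subterms, ⟨t, ht, rfl⟩, hu⟩

theorem self_mem_subterms (t : Trm F V) : t ∈ t.subterms := by
  cases t with
  | var x => simp [mem_subterms_var]
  | app f ts => simp [mem_subterms_app]

theorem mem_subterms_iff (s u : Trm F V) :
    u ∈ s.subterms ↔ u = s ∨ u ∈ s.psubterms := by
  cases s with
  | var x => simp [mem_subterms_var, psubterms_var]
  | app f ts => simp [mem_subterms_app, mem_psubterms_app]

theorem psubterms_subset_subterms {s u : Trm F V} (h : u ∈ s.psubterms) :
    u ∈ s.subterms := (mem_subterms_iff s u).2 (Or.inr h)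

theorem sizeOf_le_of_mem_subterms :
    ∀ s : Trm F V, ∀ u ∈ s.subterms, sizeOf u ≤ sizeOf s := by
  refine Trm.ind' (fun x => ?_) (fun f ts ih => ?_)
  · intro u hu; rw [mem_subterms_var] at hu; exact hu ▸ le_rfl
  · intro u hu
    rw [mem_subterms_app] at hu
    rcases hu with rfl | ⟨t, ht, hu⟩
    · exact le_rfl
    · have h1 := ih t ht u hu
      have h2 := List.sizeOf_lt_of_mem ht
      simp only [Trm.app.sizeOf_spec]
      omega

theorem sizeOf_lt_of_mem_psubterms {s u : Trm F V} (h : u ∈ s.psubterms) :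
    sizeOf u < sizeOf s := by
  cases s with
  | var x => rw [psubterms_var] at h; simp at h
  | app f ts =>
    rw [mem_psubterms_app] at h
    obtain ⟨t, ht, hu⟩ := h
    have h1 := sizeOf_le_of_mem_subterms t u hu
    have h2 := List.sizeOf_lt_of_mem ht
    simp only [Trm.app.sizeOf_spec]
    omega

theorem subterms_trans :
    ∀ s : Trm F V, ∀ t ∈ s.subterms, ∀ u ∈ t.subterms, u ∈ s.subterms := by
  refine Trm.ind' (fun x => ?_) (fun f ts ih => ?_)
  · intro t ht u hu; rw [mem_subterms_var] at ht ⊢; subst ht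
    rwa [mem_subterms_var] at hu
  · intro t ht u hu
    rw [mem_subterms_app] at ht ⊢
    rcases ht with rfl | ⟨a, ha, hta⟩
    · rw [mem_subterms_app] at hu; exact hu
    · exact Or.inr ⟨a, ha, ih a ha t hta u hu⟩

theorem ground_args {f : F} {ts : List (Trm F V)} (h : (Trm.app f ts).IsGround) :
    ∀ t ∈ ts, t.IsGround := by cases h with | app h => exact h

theorem ground_of_mem_subterms :
    ∀ s : Trm F V, s.IsGround → ∀ u ∈ s.subterms, u.IsGround := by
  refine Trm.ind' (fun x => ?_) (fun f ts ih => ?_)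
  · intro hg u hu; rw [mem_subterms_var] at hu; subst hu; exact hg
  · intro hg u hu
    rw [mem_subterms_app] at hu
    rcases hu with rfl | ⟨t, ht, hu⟩
    · exact hg
    · exact ih t ht (ground_args hg t ht) u hu

theorem subst_mem_subterms (θ : V → Trm F V) :
    ∀ s : Trm F V, ∀ u ∈ s.subterms, u.subst θ ∈ (s.subst θ).subterms := by
  refine Trm.ind' (fun x => ?_) (fun f ts ih => ?_)
  · intro u hu; rw [mem_subterms_var] at hu; subst hu; exact self_mem_subterms _
  · intro u hu
    rw [mem_subterms_app] at hu
    rcases hu with rfl | ⟨t, ht, hu⟩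
    · exact self_mem_subterms _
    · rw [subst_app, mem_subterms_app]
      exact Or.inr ⟨t.subst θ, List.mem_map_of_mem ht, ih t ht u hu⟩

theorem subst_mem_psubterms (θ : V → Trm F V) (s : Trm F V) :
    ∀ u ∈ s.psubterms, u.subst θ ∈ (s.subst θ).psubterms := by
  cases s with
  | var x => simp [psubterms_var]
  | app f ts =>
    intro u hu
    rw [mem_psubterms_app] at hu
    obtain ⟨t, ht, hu⟩ := hu
    rw [subst_app, mem_psubterms_app]
    exact ⟨t.subst θ, List.mem_map_of_mem ht, subst_mem_subterms θ t u hu⟩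


/-! ### Ordering lemmas -/

variable (O : ReductionOrdering F V)

theorem Ogt_irrefl (a : Trm F V) : ¬ O.gt a a := by
  intro h
  exact (O.wf.isIrrefl).irrefl a h

theorem Ogt_asym {a b : Trm F V} (h : O.gt a b) : ¬ O.gt b a :=
  fun h' => Ogt_irrefl O a (O.trans h h')

/-- `b ⪯ a` -/
def ge' (a b : Trm F V) : Prop := b = a ∨ O.gt a b

theorem ge'_trans {a b c : Trm F V} (h1 : ge' O a b) (h2 : ge' O b c) : ge' O a c := by
  rcases h1 with rfl | h1
  · exact h2
  · rcases h2 with rfl | h2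
    · exact Or.inr h1
    · exact Or.inr (O.trans h1 h2)

theorem ge'_top {top a b : Trm F V} (hab : ge' O a b) (hta : ge' O top a)
    (hbt : b = top) : a = top := by
  subst hbt
  rcases hta with rfl | hta
  · rfl
  · rcases hab with h | hab
    · exact h.symm
    · exact absurd (O.trans hta hab) (Ogt_irrefl O _)

theorem arg_gt {f : F} {ts : List (Trm F V)} (hg : (Trm.app f ts).IsGround)
    {a : Trm F V} (ha : a ∈ ts) : O.gt (Trm.app f ts) a := by
  set s := Trm.app f ts with hs
  have hag : a.IsGround := ground_args hg a ha
  have hne : a ≠ s := by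
    intro h
    have h1 := List.sizeOf_lt_of_mem ha
    rw [h] at h1
    simp only [hs, Trm.app.sizeOf_spec] at h1
    omega
  rcases O.total_ground hag hg hne with h | h
  · -- a ≻ s : derive contradiction via infinite descent
    exfalso
    obtain ⟨l, r, hlr⟩ := List.append_of_mem ha
    set g : ℕ → Trm F V := fun n => Nat.rec s (fun _ u => Trm.app f (l ++ u :: r)) n with hgdef
    have hstep : ∀ n, O.gt (g n) (g (n + 1)) := by
      intro n
      induction n with
      | zero =>
        show O.gt s (Trm.app f (l ++ s :: r))
        have h2 : s = Trm.app f (l ++ a :: r) := by rw [hs, hlr]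
        nth_rewrite 1 [h2]
        exact O.compat_ctx f l r h
      | succ n ihn =>
        exact O.compat_ctx f l r ihn
    obtain ⟨m, ⟨n, hn⟩, hmin⟩ := O.wf.has_min (Set.range g) ⟨g 0, 0, rfl⟩
    exact hmin (g (n + 1)) ⟨n + 1, rfl⟩ (hn ▸ hstep n)
  · exact h

theorem psubterm_gt : ∀ s : Trm F V, s.IsGround → ∀ u ∈ s.psubterms, O.gt s u := by
  refine Trm.ind' (fun x => ?_) (fun f ts ih => ?_)
  · intro _ u hu; rw [psubterms_var] at hu; simp at hu
  · intro hg u hu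
    rw [mem_psubterms_app] at hu
    obtain ⟨a, ha, hu⟩ := hu
    have h1 : O.gt (Trm.app f ts) a := arg_gt O hg ha
    rcases (mem_subterms_iff a u).1 hu with rfl | hu'
    · exact h1
    · exact O.trans h1 (ih a ha (ground_args hg a ha) u hu')

theorem subterm_ge {s : Trm F V} (hg : s.IsGround) {u : Trm F V}
    (hu : u ∈ s.subterms) : ge' O s u := by
  rcases (mem_subterms_iff s u).1 hu with rfl | hu'
  · exact Or.inl rfl
  · exact Or.inr (psubterm_gt O s hg u hu')

theorem app_mono (f : F) : ∀ (bs as : List (Trm F V)) (l : List (Trm F V)),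
    List.Forall₂ (fun a b => ge' O b a) as bs →
    ge' O (Trm.app f (l ++ bs)) (Trm.app f (l ++ as)) := by
  intro bs
  induction bs with
  | nil =>
    intro as l h
    cases h
    exact Or.inl rfl
  | cons b bs ih =>
    intro as l h
    cases h with
    | cons hab htl =>
      rename_i a as'
      have step1 : ge' O (Trm.app f (l ++ b :: bs)) (Trm.app f (l ++ a :: bs)) := by
        rcases hab with rfl | hab
        · exact Or.inl rfl
        · exact Or.inr (O.compat_ctx f l bs hab)
      have step2 : ge' O (Trm.app f (l ++ a :: bs)) (Trm.app f (l ++ a :: as')) := by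
        have := ih as' (l ++ [a]) htl
        simpa using this
      exact ge'_trans O step1 step2


/-! ### Rewriting lemmas -/

variable {R : Set (Trm F V × Trm F V)}

/-- rules are decreasing and ground -/
def NiceRules (O : ReductionOrdering F V) (R : Set (Trm F V × Trm F V)) : Prop :=
  ∀ q ∈ R, O.gt q.1 q.2 ∧ q.1.IsGround ∧ q.2.IsGround

theorem rewAt_lhs_mem {s s' u : Trm F V} {b : Bool} (h : RewAt R s s' u b) :
    u ∈ s.subterms := by
  induction h with
  | root _ => exact self_mem_subterms _
  | @congr t t' u b f l r _ ih =>
    rw [mem_subterms_app]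
    exact Or.inr ⟨t, by simp, ih⟩

theorem rewAt_root_eq {s s' u : Trm F V} (h : RewAt R s s' u true) : u = s := by
  cases h; rfl

theorem rewAt_rule {s s' u : Trm F V} {b : Bool} (h : RewAt R s s' u b) :
    ∃ v, (u, v) ∈ R ∧ ∀ R' : Set (Trm F V × Trm F V), (u, v) ∈ R' → RewAt R' s s' u b := by
  induction h with
  | @root u v h => exact ⟨v, h, fun R' h' => RewAt.root h'⟩
  | congr _ ih =>
    obtain ⟨v, hv, htr⟩ := ih
    exact ⟨v, hv, fun R' h' => RewAt.congr (htr R' h')⟩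

theorem rewAt_gt (hR : NiceRules O R) {s s' u : Trm F V} {b : Bool}
    (h : RewAt R s s' u b) : O.gt s s' := by
  induction h with
  | root h => exact (hR _ h).1
  | congr _ ih => exact O.compat_ctx _ _ _ ih

theorem step_gt (hR : NiceRules O R) {s s' : Trm F V} (h : Step R s s') : O.gt s s' := by
  obtain ⟨u, b, h⟩ := h; exact rewAt_gt O hR h

theorem rewAt_ground (hR : NiceRules O R) {s s' u : Trm F V} {b : Bool}
    (h : RewAt R s s' u b) (hg : s.IsGround) : s'.IsGround := by
  induction h with
  | root h => exact (hR _ h).2.2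
  | @congr t t' u b f l r _ ih =>
    have hts := ground_args hg
    refine Trm.IsGround.app fun a ha => ?_
    rcases List.mem_append.1 ha with ha | ha
    · exact hts a (by simp [ha])
    · rcases List.mem_cons.1 ha with rfl | ha
      · exact ih (hts t (by simp))
      · exact hts a (by simp [ha])

theorem step_ground (hR : NiceRules O R) {s s' : Trm F V} (h : Step R s s')
    (hg : s.IsGround) : s'.IsGround := by
  obtain ⟨u, b, h⟩ := h; exact rewAt_ground O hR h hg

theorem rewAt_lift : ∀ v : Trm F V, ∀ t ∈ v.subterms, ∀ {t' u : Trm F V} {b : Bool},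
    RewAt R t t' u b → ∃ v' b', RewAt R v v' u b' := by
  refine Trm.ind' (fun x => ?_) (fun f ts ih => ?_)
  · intro t ht t' u b h
    rw [mem_subterms_var] at ht
    subst ht
    exact ⟨t', b, h⟩
  · intro t ht t' u b h
    rw [mem_subterms_app] at ht
    rcases ht with rfl | ⟨a, ha, hta⟩
    · exact ⟨t', b, h⟩
    · obtain ⟨a', b', h'⟩ := ih a ha t hta h
      obtain ⟨l, r, rfl⟩ := List.append_of_mem ha
      exact ⟨Trm.app f (l ++ a' :: r), false, RewAt.congr h'⟩

theorem step_lift {v t : Trm F V} (ht : t ∈ v.subterms) {t' : Trm F V}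
    (h : Step R t t') : ∃ v', Step R v v' := by
  obtain ⟨u, b, h⟩ := h
  obtain ⟨v', b', h'⟩ := rewAt_lift v t ht h
  exact ⟨v', u, b', h'⟩

theorem exists_reachNF (hR : NiceRules O R) : ∀ t : Trm F V, ∃ t', ReachNF R t t' := by
  intro t
  induction t using WellFounded.induction O.wf with
  | _ t ih =>
    by_cases h : Irred R t
    · exact ⟨t, Relation.ReflTransGen.refl, h⟩
    · rw [Irred] at h; push_neg at h
      obtain ⟨t1, h1⟩ := h
      obtain ⟨t', h2, h3⟩ := ih t1 (step_gt O hR h1)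
      exact ⟨t', Relation.ReflTransGen.head h1 h2, h3⟩

theorem nf_spec (hR : NiceRules O R) (t : Trm F V) : ReachNF R t (nf R t) := by
  rw [nf, dif_pos (exists_reachNF O hR t)]
  exact (exists_reachNF O hR t).choose_spec

theorem nf_irred (hR : NiceRules O R) (t : Trm F V) : Irred R (nf R t) :=
  (nf_spec O hR t).2

theorem reflTrans_ge (hR : NiceRules O R) {t t' : Trm F V}
    (h : Relation.ReflTransGen (Step R) t t') : ge' O t t' := by
  induction h with
  | refl => exact Or.inl rfl
  | tail _ h2 ih => exact ge'_trans O ih (Or.inr (step_gt O hR h2))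

theorem nf_ge (hR : NiceRules O R) (t : Trm F V) : ge' O t (nf R t) :=
  reflTrans_ge O hR (nf_spec O hR t).1

theorem nf_ground (hR : NiceRules O R) {t : Trm F V} (hg : t.IsGround) :
    (nf R t).IsGround := by
  have h := (nf_spec O hR t).1
  generalize nf R t = w at h
  induction h with
  | refl => exact hg
  | tail _ h2 ih => exact step_ground O hR h2 ih

theorem nf_irred_self (hR : NiceRules O R) {t : Trm F V} (h : Irred R t) :
    nf R t = t := by
  have h1 := (nf_spec O hR t).1
  rcases Relation.ReflTransGen.cases_head h1 with heq | ⟨c, hc, -⟩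
  · exact heq.symm
  · exact absurd hc (h c)

theorem rm_exists (hR : NiceRules O R) : ∀ (t : Trm F V) (m : ℕ), ∃ S, RM R t m S := by
  intro t
  induction t using WellFounded.induction O.wf with
  | _ t ih =>
    intro m
    by_cases h : Irred R t
    · exact ⟨0, RM.irred h⟩
    · rw [Irred] at h; push_neg at h
      obtain ⟨t1, u, b, h1⟩ := h
      have ht1 : O.gt t t1 := rewAt_gt O hR h1
      by_cases hb : b = true ∨ 0 < m
      · obtain ⟨S, hS⟩ := ih t1 ht1 m
        exact ⟨_, RM.step_top h1 hb hS⟩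
      · push_neg at hb
        obtain ⟨hb1, hb2⟩ := hb
        obtain ⟨S, hS⟩ := ih t1 ht1 0
        have hm : m = 0 := by omega
        subst hm
        have hb1' : b = false := by simpa using hb1
        subst hb1'
        exact ⟨_, RM.step_deep h1 hS⟩

theorem rm_spec (hR : NiceRules O R) (t : Trm F V) (m : ℕ) : RM R t m (rm R t m) := by
  rw [rm, dif_pos (rm_exists O hR t m)]
  exact (rm_exists O hR t m).choose_spec

theorem rewAt_lhs_ge (hR : NiceRules O R) {s s' u : Trm F V} {b : Bool}
    (h : RewAt R s s' u b) (hg : s.IsGround) : ge' O s u :=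
  subterm_ge O hg (rewAt_lhs_mem h)

theorem rewAt_nonroot_gt (hR : NiceRules O R) {s s' u : Trm F V}
    (h : RewAt R s s' u false) (hg : s.IsGround) : O.gt s u := by
  cases h with
  | @congr t t' u b f l r h1 =>
    have ht : t ∈ (Trm.app f (l ++ t :: r)).psubterms := by
      rw [mem_psubterms_app]
      exact ⟨t, by simp, self_mem_subterms t⟩
    have h2 : O.gt (Trm.app f (l ++ t :: r)) t := psubterm_gt O _ hg t ht
    rcases rewAt_lhs_ge O hR h1 (ground_of_mem_subterms _ hg t (psubterms_subset_subterms ht)) with rfl | h3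
    · exact h2
    · exact O.trans h2 h3

theorem rm_bound (hR : NiceRules O R) {v : Trm F V} {m : ℕ} {S : Multiset (Trm F V × ℕ)}
    (h : RM R v m S) (hg : v.IsGround) :
    ∀ p ∈ S, O.gt v p.1 ∨ (p.1 = v ∧ p.2 = m) := by
  induction h with
  | irred _ => intro p hp; simp at hp
  | @step_top t t' u b m S hrw hb hRM ih =>
    intro p hp
    have hg' : t'.IsGround := rewAt_ground O hR hrw hg
    have htt' : O.gt t t' := rewAt_gt O hR hrw
    rcases Multiset.mem_cons.1 hp with rfl | hp
    · rcases rewAt_lhs_ge O hR hrw hg with heq | hgt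
      · exact Or.inr ⟨heq, rfl⟩
      · exact Or.inl hgt
    · rcases ih hg' p hp with h1 | ⟨h1, h2⟩
      · exact Or.inl (O.trans htt' h1)
      · exact Or.inl (h1 ▸ htt')
  | @step_deep t t' u S hrw hRM ih =>
    intro p hp
    have hg' : t'.IsGround := rewAt_ground O hR hrw hg
    have htt' : O.gt t t' := rewAt_gt O hR hrw
    rcases Multiset.mem_cons.1 hp with rfl | hp
    · exact Or.inl (rewAt_nonroot_gt O hR hrw hg)
    · rcases ih hg' p hp with h1 | ⟨h1, h2⟩
      · exact Or.inl (O.trans htt' h1)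
      · exact Or.inl (h1 ▸ htt')


/-! ### Candidate interpretation facts -/

theorem closure_ground_lit {Cl : Clause F V} {θ : V → Trm F V}
    (hg : Closure.IsGround (Cl, θ)) {L : Lit F V} (hL : L ∈ Cl) :
    (L.subst θ).IsGround :=
  hg _ (Multiset.mem_map_of_mem _ hL)

variable {T : TieBreak F V} {N : Set (Closure F V)} {E : Trm F V → Set (Trm F V × Trm F V)}

theorem rstar_mem (hE : IsCandidate O T N E) {a b : Trm F V} (h : (a, b) ∈ Rstar E) :
    (a, b) ∈ E a ∧ a.IsGround ∧ b.IsGround ∧ O.gt a b ∧ Irred (Rbelow O E a) a := by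
  obtain ⟨s, hs⟩ := h
  rcases hE s with ⟨C', u, u', θ', hPF, hEs⟩ | ⟨-, hEs⟩
  · rw [hEs] at hs
    have hab : a = s ∧ b = u'.subst θ' := by
      simpa [Prod.ext_iff] using hs
    obtain ⟨rfl, rfl⟩ := hab
    obtain ⟨hus, hPC, -⟩ := hPF
    obtain ⟨hN, hg, hsm, hirr, hnm, hgt⟩ := hPC
    have hlit : Lit.pos u u' ∈ C' + {Lit.pos u u'} := by simp
    have hlg := closure_ground_lit hg hlit
    obtain ⟨hg1, hg2⟩ : (u.subst θ').IsGround ∧ (u'.subst θ').IsGround := hlg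
    rw [hus] at hg1 hgt hirr
    refine ⟨hEs ▸ rfl, hg1, hg2, hgt, hirr⟩
  · rw [hEs] at hs; simp at hs

theorem rstar_nice (hE : IsCandidate O T N E) : NiceRules O (Rstar E) := by
  rintro ⟨a, b⟩ h
  obtain ⟨-, h1, h2, h3, -⟩ := rstar_mem O hE h
  exact ⟨h3, h1, h2⟩

theorem localize (hE : IsCandidate O T N E) {c a b : Trm F V} (hc : O.gt c a)
    (h : (a, b) ∈ Rstar E) : (a, b) ∈ Rbelow O E c :=
  ⟨a, hc, (rstar_mem O hE h).1⟩

theorem rewAt_localize (hE : IsCandidate O T N E) {s s' u : Trm F V} {b : Bool}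
    (h : RewAt (Rstar E) s s' u b) {c : Trm F V} (hc : O.gt c u) :
    RewAt (Rbelow O E c) s s' u b := by
  obtain ⟨v, hv, htr⟩ := rewAt_rule h
  exact htr _ (localize O hE hc hv)

theorem psub_irred (hE : IsCandidate O T N E) {tt tt' : Trm F V}
    (hrule : (tt, tt') ∈ Rstar E) : ∀ p ∈ tt.psubterms, Irred (Rstar E) p := by
  intro p hp t1 hstep
  obtain ⟨u, b, hrw⟩ := hstep
  have httg : tt.IsGround := (rstar_mem O hE hrule).2.1
  have hpg : p.IsGround :=
    ground_of_mem_subterms tt httg p (psubterms_subset_subterms hp)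
  have h1 : O.gt tt p := psubterm_gt O tt httg p hp
  have h2 : O.gt tt u := by
    rcases rewAt_lhs_ge O (rstar_nice O hE) hrw hpg with rfl | h3
    · exact h1
    · exact O.trans h1 h3
  have h3 := rewAt_localize O hE hrw h2
  obtain ⟨a1, b', h4⟩ := rewAt_lift tt p (psubterms_subset_subterms hp) h3
  exact (rstar_mem O hE hrule).2.2.2.2 a1 ⟨u, b', h4⟩

theorem no_lhs_above (hE : IsCandidate O T N E) {a b tt tt' : Trm F V}
    (ha : (a, b) ∈ Rstar E) (hrule : (tt, tt') ∈ Rstar E)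
    (hsub : tt ∈ a.psubterms) : False := by
  have hag : a.IsGround := (rstar_mem O hE ha).2.1
  have h1 : O.gt a tt := psubterm_gt O a hag tt hsub
  have h2 : (tt, tt') ∈ Rbelow O E a := localize O hE h1 hrule
  obtain ⟨a1, b', h3⟩ :=
    rewAt_lift a tt (psubterms_subset_subterms hsub) (RewAt.root h2)
  exact (rstar_mem O hE ha).2.2.2.2 a1 ⟨tt, b', h3⟩

theorem occ_preserved (hE : IsCandidate O T N E) {tt tt' : Trm F V}
    (hrule : (tt, tt') ∈ Rstar E) {s s' u : Trm F V} {b : Bool}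
    (h : RewAt (Rstar E) s s' u b) (hg : s.IsGround) (htt : tt ∈ s.subterms)
    (hgt : O.gt tt u) : tt ∈ s'.subterms := by
  induction h with
  | @root u v hmem =>
    have hug : u.IsGround := ((rstar_nice O hE) _ hmem).2.1
    rcases subterm_ge O hug htt with rfl | h1
    · exact absurd hgt (Ogt_irrefl O _)
    · exact absurd h1 (Ogt_asym O hgt)
  | @congr t0 t0' u b f l r inner ih =>
    rcases (mem_subterms_app f (l ++ t0 :: r) tt).1 htt with rfl | ⟨a, ha, hta⟩
    · exfalso
      have ht0 : t0 ∈ (Trm.app f (l ++ t0 :: r)).psubterms := by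
        rw [mem_psubterms_app]; exact ⟨t0, by simp, self_mem_subterms t0⟩
      exact psub_irred O hE hrule t0 ht0 t0' ⟨u, b, inner⟩
    · rw [mem_subterms_app]
      rcases List.mem_append.1 ha with hl | hcr
      · exact Or.inr ⟨a, by simp [hl], hta⟩
      · rcases List.mem_cons.1 hcr with rfl | hr
        · have hag : a.IsGround := ground_args hg a (by simp)
          exact Or.inr ⟨t0', by simp, ih hag hta hgt⟩
        · exact Or.inr ⟨a, by simp [hr], hta⟩

theorem occ_preserved_psub (hE : IsCandidate O T N E) {tt tt' : Trm F V}
    (hrule : (tt, tt') ∈ Rstar E) {s s' u : Trm F V} {b : Bool}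
    (h : RewAt (Rstar E) s s' u b) (hg : s.IsGround) (htt : tt ∈ s.psubterms)
    (hgt : O.gt tt u) : tt ∈ s'.psubterms := by
  cases h with
  | root hmem =>
    have hug := ((rstar_nice O hE) _ hmem).2.1
    exact absurd (psubterm_gt O _ hug tt htt) (Ogt_asym O hgt)
  | @congr t0 t0' u b f l r inner =>
    rcases (mem_psubterms_app f (l ++ t0 :: r) tt).1 htt with ⟨a, ha, hta⟩
    rw [mem_psubterms_app]
    rcases List.mem_append.1 ha with hl | hcr
    · exact ⟨a, by simp [hl], hta⟩
    · rcases List.mem_cons.1 hcr with rfl | hr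
      · have hag : a.IsGround := ground_args hg a (by simp)
        exact ⟨t0', by simp, occ_preserved O hE hrule inner hag hta hgt⟩
      · exact ⟨a, by simp [hr], hta⟩

theorem rm_contains (hE : IsCandidate O T N E) {tt tt' : Trm F V}
    (hrule : (tt, tt') ∈ Rstar E) {v : Trm F V} {m : ℕ} {S : Multiset (Trm F V × ℕ)}
    (h : RM (Rstar E) v m S) :
    v.IsGround → tt ∈ v.subterms → (1 ≤ m ∨ tt ∈ v.psubterms) →
    ∃ p ∈ S, O.gt p.1 tt ∨ (p.1 = tt ∧ 1 ≤ p.2) := by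
  have httg : tt.IsGround := (rstar_mem O hE hrule).2.1
  induction h with
  | @irred v m hirr =>
    intro hg htt _
    exfalso
    obtain ⟨v1, hv1⟩ := step_lift htt ⟨tt, true, RewAt.root hrule⟩
    exact hirr v1 hv1
  | @step_top v v' u b m S hrw hb hRM ih =>
    intro hg htt hprop
    obtain ⟨vv, hvv, -⟩ := rewAt_rule hrw
    have hug : u.IsGround := ((rstar_nice O hE) _ hvv).2.1
    by_cases hut : u = tt
    · subst hut
      rcases Nat.lt_or_ge 0 m with hm | hm
      · exact ⟨(u, m), Multiset.mem_cons_self _ _, Or.inr ⟨rfl, hm⟩⟩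
      · have hm0 : m = 0 := by omega
        subst hm0
        have hb' : b = true := by rcases hb with h | h; exact h; omega
        subst hb'
        have := rewAt_root_eq hrw
        subst this
        rcases hprop with h | h
        · omega
        · exact absurd (sizeOf_lt_of_mem_psubterms h) (by omega)
    · rcases O.total_ground hug httg hut with hgt | hgt
      · exact ⟨(u, m), Multiset.mem_cons_self _ _, Or.inl hgt⟩
      · have hg' : v'.IsGround := rewAt_ground O (rstar_nice O hE) hrw hg
        have htt' : tt ∈ v'.subterms := occ_preserved O hE hrule hrw hg htt hgt
        have hprop' : 1 ≤ m ∨ tt ∈ v'.psubterms := by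
          rcases hprop with h | h
          · exact Or.inl h
          · exact Or.inr (occ_preserved_psub O hE hrule hrw hg h hgt)
        obtain ⟨p, hp, hgood⟩ := ih hg' htt' hprop'
        exact ⟨p, Multiset.mem_cons_of_mem hp, hgood⟩
  | @step_deep v v' u S hrw hRM ih =>
    intro hg htt hprop
    obtain ⟨vv, hvv, -⟩ := rewAt_rule hrw
    have hug : u.IsGround := ((rstar_nice O hE) _ hvv).2.1
    by_cases hut : u = tt
    · subst hut
      exact ⟨(u, 1), Multiset.mem_cons_self _ _, Or.inr ⟨rfl, le_rfl⟩⟩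
    · rcases O.total_ground hug httg hut with hgt | hgt
      · exact ⟨(u, 1), Multiset.mem_cons_self _ _, Or.inl hgt⟩
      · have hg' : v'.IsGround := rewAt_ground O (rstar_nice O hE) hrw hg
        have htt' : tt ∈ v'.subterms := occ_preserved O hE hrule hrw hg htt hgt
        have hpp : tt ∈ v.psubterms := by
          rcases hprop with h | h
          · omega
          · exact h
        have hprop' : (1:ℕ) ≤ 0 ∨ tt ∈ v'.psubterms :=
          Or.inr (occ_preserved_psub O hE hrule hrw hg hpp hgt)
        obtain ⟨p, hp, hgood⟩ := ih hg' htt' hprop'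
        exact ⟨p, Multiset.mem_cons_of_mem hp, hgood⟩


/-! ### Literal and clause set lemmas -/

theorem lit_subst_pos (θ : V → Trm F V) (a b : Trm F V) :
    (Lit.pos a b).subst θ = Lit.pos (a.subst θ) (b.subst θ) := rfl

theorem lit_subst_neg (θ : V → Trm F V) (a b : Trm F V) :
    (Lit.neg a b).subst θ = Lit.neg (a.subst θ) (b.subst θ) := rfl

theorem negSubs_subst {L : Lit F V} {u : Trm F V} (h : u ∈ L.negSubs) (θ : V → Trm F V) :
    u.subst θ ∈ (L.subst θ).negSubs := by
  cases L with
  | pos a b => simp [Lit.negSubs] at h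
  | neg a b =>
    rw [lit_subst_neg]
    simp only [Lit.negSubs, Finset.mem_union] at h ⊢
    rcases h with h | h
    · exact Or.inl (subst_mem_subterms θ a u h)
    · exact Or.inr (subst_mem_subterms θ b u h)

theorem posPSubs_subst {L : Lit F V} {u : Trm F V} (h : u ∈ L.posPSubs) (θ : V → Trm F V) :
    u.subst θ ∈ (L.subst θ).posPSubs := by
  cases L with
  | neg a b => simp [Lit.posPSubs] at h
  | pos a b =>
    rw [lit_subst_pos]
    simp only [Lit.posPSubs, Finset.mem_union] at h ⊢
    rcases h with h | h
    · exact Or.inl (subst_mem_psubterms θ a u h)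
    · exact Or.inr (subst_mem_psubterms θ b u h)

theorem allSubs_of_negSubs {L : Lit F V} {u : Trm F V} (h : u ∈ L.negSubs) :
    u ∈ L.allSubs := by
  cases L with
  | pos a b => simp [Lit.negSubs] at h
  | neg a b => exact h

theorem allSubs_of_posPSubs {L : Lit F V} {u : Trm F V} (h : u ∈ L.posPSubs) :
    u ∈ L.allSubs := by
  cases L with
  | neg a b => simp [Lit.posPSubs] at h
  | pos a b =>
    simp only [Lit.posPSubs, Lit.allSubs, Finset.mem_union] at h ⊢
    rcases h with h | h
    · exact Or.inl (psubterms_subset_subterms h)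
    · exact Or.inr (psubterms_subset_subterms h)

theorem allSubs_of_posTops {L : Lit F V} {u : Trm F V} (h : u ∈ L.posTops) :
    u ∈ L.allSubs := by
  cases L with
  | neg a b => simp [Lit.posTops] at h
  | pos a b =>
    simp only [Lit.posTops, Finset.mem_insert, Finset.mem_singleton] at h
    simp only [Lit.allSubs, Finset.mem_union]
    rcases h with rfl | rfl
    · exact Or.inl (self_mem_subterms u)
    · exact Or.inr (self_mem_subterms u)

theorem negSubs_of_negTops {L : Lit F V} {u : Trm F V} (h : u ∈ L.negTops) :
    u ∈ L.negSubs := by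
  cases L with
  | pos a b => simp [Lit.negTops] at h
  | neg a b =>
    simp only [Lit.negTops, Finset.mem_insert, Finset.mem_singleton] at h
    simp only [Lit.negSubs, Finset.mem_union]
    rcases h with rfl | rfl
    · exact Or.inl (self_mem_subterms u)
    · exact Or.inr (self_mem_subterms u)

theorem allSubs_subst {L : Lit F V} {u : Trm F V} (h : u ∈ L.allSubs) (θ : V → Trm F V) :
    u.subst θ ∈ (L.subst θ).allSubs := by
  cases L with
  | pos a b =>
    rw [lit_subst_pos]
    simp only [Lit.allSubs, Finset.mem_union] at h ⊢
    rcases h with h | h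
    · exact Or.inl (subst_mem_subterms θ a u h)
    · exact Or.inr (subst_mem_subterms θ b u h)
  | neg a b =>
    rw [lit_subst_neg]
    simp only [Lit.allSubs, Finset.mem_union] at h ⊢
    rcases h with h | h
    · exact Or.inl (subst_mem_subterms θ a u h)
    · exact Or.inr (subst_mem_subterms θ b u h)

theorem mem_ssN {Cl : Clause F V} {u : Trm F V} :
    u ∈ ssN Cl ↔ ∃ L ∈ Cl, u ∈ L.negSubs := by
  simp [ssN, Finset.mem_sup, Multiset.mem_toFinset]

theorem mem_ssPp {Cl : Clause F V} {u : Trm F V} :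
    u ∈ ssPp Cl ↔ ∃ L ∈ Cl, u ∈ L.posPSubs := by
  simp [ssPp, Finset.mem_sup, Multiset.mem_toFinset]

theorem mem_tsP {Cl : Clause F V} {u : Trm F V} :
    u ∈ tsP Cl ↔ ∃ L ∈ Cl, u ∈ L.posTops := by
  simp [tsP, Finset.mem_sup, Multiset.mem_toFinset]

theorem mem_tsN {Cl : Clause F V} {u : Trm F V} :
    u ∈ tsN Cl ↔ ∃ L ∈ Cl, u ∈ L.negTops := by
  simp [tsN, Finset.mem_sup, Multiset.mem_toFinset]

theorem mem_allSub {Cl : Clause F V} {u : Trm F V} :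
    u ∈ allSub Cl ↔ ∃ L ∈ Cl, u ∈ L.allSubs := by
  simp [allSub, Finset.mem_sup, Multiset.mem_toFinset]

theorem ssN_subst {Cl : Clause F V} {u : Trm F V} (h : u ∈ ssN Cl) (θ : V → Trm F V) :
    u.subst θ ∈ ssN (Clause.subst θ Cl) := by
  obtain ⟨L, hL, h⟩ := mem_ssN.1 h
  exact mem_ssN.2 ⟨L.subst θ, Multiset.mem_map_of_mem _ hL, negSubs_subst h θ⟩

theorem ssPp_subst {Cl : Clause F V} {u : Trm F V} (h : u ∈ ssPp Cl) (θ : V → Trm F V) :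
    u.subst θ ∈ ssPp (Clause.subst θ Cl) := by
  obtain ⟨L, hL, h⟩ := mem_ssPp.1 h
  exact mem_ssPp.2 ⟨L.subst θ, Multiset.mem_map_of_mem _ hL, posPSubs_subst h θ⟩

theorem union4_subst_allSub {Cl : Clause F V} {u : Trm F V}
    (h : u ∈ ssN Cl ∨ u ∈ ssPp Cl ∨ u ∈ tsP Cl ∨ u ∈ tsN Cl) (θ : V → Trm F V) :
    u.subst θ ∈ allSub (Clause.subst θ Cl) := by
  have key : ∃ L ∈ Cl, u ∈ L.allSubs := by
    rcases h with h | h | h | h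
    · obtain ⟨L, hL, h⟩ := mem_ssN.1 h; exact ⟨L, hL, allSubs_of_negSubs h⟩
    · obtain ⟨L, hL, h⟩ := mem_ssPp.1 h; exact ⟨L, hL, allSubs_of_posPSubs h⟩
    · obtain ⟨L, hL, h⟩ := mem_tsP.1 h; exact ⟨L, hL, allSubs_of_posTops h⟩
    · obtain ⟨L, hL, h⟩ := mem_tsN.1 h
      exact ⟨L, hL, allSubs_of_negSubs (negSubs_of_negTops h)⟩
  obtain ⟨L, hL, h'⟩ := key
  exact mem_allSub.2 ⟨L.subst θ, Multiset.mem_map_of_mem _ hL, allSubs_subst h' θ⟩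

theorem lit_ground_sides {a b : Trm F V} :
    ((Lit.pos a b).IsGround → a.IsGround ∧ b.IsGround) ∧
    ((Lit.neg a b).IsGround → a.IsGround ∧ b.IsGround) :=
  ⟨fun h => h, fun h => h⟩

theorem allSub_ground {Cg : Clause F V} (hg : Clause.IsGround Cg) {u : Trm F V}
    (h : u ∈ allSub Cg) : u.IsGround := by
  obtain ⟨L, hL, h⟩ := mem_allSub.1 h
  have hLg := hg L hL
  cases L with
  | pos a b =>
    obtain ⟨ha, hb⟩ : a.IsGround ∧ b.IsGround := hLg
    simp only [Lit.allSubs, Finset.mem_union] at h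
    rcases h with h | h
    · exact ground_of_mem_subterms a ha u h
    · exact ground_of_mem_subterms b hb u h
  | neg a b =>
    obtain ⟨ha, hb⟩ : a.IsGround ∧ b.IsGround := hLg
    simp only [Lit.allSubs, Finset.mem_union] at h
    rcases h with h | h
    · exact ground_of_mem_subterms a ha u h
    · exact ground_of_mem_subterms b hb u h

/-! ### lss / lts lemmas -/

theorem lss_of_ssN {Cl : Clause F V} {w : Trm F V} (h : w ∈ ssN Cl) :
    (w, 2) ∈ lss Cl := by
  unfold lss
  exact Finset.mem_union_left _
    (Finset.mem_union_left _ (Finset.mem_image_of_mem _ h))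

theorem lss_of_ssPp {Cl : Clause F V} {w : Trm F V} (h : w ∈ ssPp Cl) :
    ∃ m, 1 ≤ m ∧ (w, m) ∈ lss Cl := by
  by_cases hn : w ∈ ssN Cl
  · exact ⟨2, by omega, lss_of_ssN hn⟩
  · refine ⟨1, le_rfl, ?_⟩
    unfold lss
    exact Finset.mem_union_left _ (Finset.mem_union_right _
      (Finset.mem_image_of_mem _ (Finset.mem_sdiff.2 ⟨h, hn⟩)))

theorem lss_of_tsP {Cl : Clause F V} {w : Trm F V} (h : w ∈ tsP Cl) :
    ∃ m, (w, m) ∈ lss Cl := by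
  by_cases hn : w ∈ ssN Cl
  · exact ⟨2, lss_of_ssN hn⟩
  · by_cases hp : w ∈ ssPp Cl
    · obtain ⟨m, _, hm⟩ := lss_of_ssPp hp; exact ⟨m, hm⟩
    · refine ⟨0, ?_⟩
      unfold lss
      refine Finset.mem_union_right _ (Finset.mem_image_of_mem _ ?_)
      exact Finset.mem_sdiff.2 ⟨h, by simp [hn, hp]⟩

theorem lss_cases {Cl : Clause F V} {w : Trm F V} {m : ℕ} (h : (w, m) ∈ lss Cl) :
    (w ∈ ssN Cl ∨ w ∈ ssPp Cl ∨ w ∈ tsP Cl) ∧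
    (w ∉ ssN Cl → w ∉ ssPp Cl → m = 0) := by
  unfold lss at h
  simp only [Finset.mem_union, Finset.mem_image, Finset.mem_sdiff, Prod.mk.injEq] at h
  rcases h with (⟨x, hx, rfl, rfl⟩ | ⟨x, ⟨hx1, hx2⟩, rfl, rfl⟩) | ⟨x, ⟨hx1, hx2⟩, rfl, rfl⟩
  · exact ⟨Or.inl hx, fun hn _ => absurd hx hn⟩
  · exact ⟨Or.inr (Or.inl hx1), fun _ hp => absurd hx1 hp⟩
  · exact ⟨Or.inr (Or.inr hx1), fun _ _ => rfl⟩

theorem lts_cases {Cl : Clause F V} {w : Trm F V} {m : ℕ} (h : (w, m) ∈ lts Cl) :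
    w ∈ tsN Cl ∨ w ∈ tsP Cl := by
  unfold lts at h
  simp only [Finset.mem_union, Finset.mem_image, Finset.mem_sdiff, Prod.mk.injEq] at h
  rcases h with ⟨x, hx, rfl, rfl⟩ | ⟨x, ⟨hx1, hx2⟩, rfl, rfl⟩
  · exact Or.inl hx
  · exact Or.inr hx1

/-! ### nm membership -/

theorem mem_nm_of_lss {R : Set (Trm F V × Trm F V)} {Cl : Clause F V} {θ : V → Trm F V}
    {wm : Trm F V × ℕ} (h1 : wm ∈ lss Cl) {p : Trm F V × ℕ} (h2 : p ∈ nmElt R θ wm) :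
    p ∈ nm R Cl θ := by
  unfold nm
  rw [Multiset.mem_add]
  exact Or.inl (Multiset.mem_sum.2 ⟨wm, h1, h2⟩)

theorem nm_cases {R : Set (Trm F V × Trm F V)} {Cl : Clause F V} {θ : V → Trm F V}
    {p : Trm F V × ℕ} (h : p ∈ nm R Cl θ) :
    (∃ wm ∈ lss Cl, p ∈ nmElt R θ wm) ∨
    (∃ wm ∈ lts Cl, p = (nf R (wm.1.subst θ), wm.2)) := by
  unfold nm at h
  rw [Multiset.mem_add] at h
  rcases h with h | h
  · exact Or.inl (Multiset.mem_sum.1 h)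
  · obtain ⟨wm, h1, h2⟩ := Multiset.mem_sum.1 h
    rw [Multiset.mem_singleton] at h2
    exact Or.inr ⟨wm, h1, h2⟩

theorem nmElt_var {R : Set (Trm F V × Trm F V)} (θ : V → Trm F V) (x : V) (m : ℕ) :
    nmElt R θ (Trm.var x, m) = rm R (θ x) m := rfl

theorem nmElt_app {R : Set (Trm F V × Trm F V)} (θ : V → Trm F V) (f : F)
    (ts : List (Trm F V)) (m : ℕ) :
    nmElt R θ (Trm.app f ts, m) = rm R (Trm.app f (ts.map fun t => nf R (t.subst θ))) m := rfl

/-! ### Literal multiset lemmas -/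

theorem mset_subset_allSubs {L : Lit F V} {e : Trm F V} (h : e ∈ L.mset) :
    e ∈ L.allSubs := by
  cases L with
  | pos a b =>
    simp only [Lit.mset, Multiset.insert_eq_cons, Multiset.mem_cons,
      Multiset.mem_singleton] at h
    simp only [Lit.allSubs, Finset.mem_union]
    rcases h with rfl | rfl
    · exact Or.inl (self_mem_subterms e)
    · exact Or.inr (self_mem_subterms e)
  | neg a b =>
    simp only [Lit.mset, Multiset.insert_eq_cons, Multiset.mem_cons,
      Multiset.mem_singleton] at h
    simp only [Lit.allSubs, Finset.mem_union]
    rcases h with rfl | rfl | rfl | rfl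
    · exact Or.inl (self_mem_subterms e)
    · exact Or.inl (self_mem_subterms e)
    · exact Or.inr (self_mem_subterms e)
    · exact Or.inr (self_mem_subterms e)

theorem mset_neg_negSubs {a b e : Trm F V} (h : e ∈ (Lit.neg a b).mset) :
    e ∈ (Lit.neg a b).negSubs := by
  simp only [Lit.mset, Multiset.insert_eq_cons, Multiset.mem_cons,
    Multiset.mem_singleton] at h
  simp only [Lit.negSubs, Finset.mem_union]
  rcases h with rfl | rfl | rfl | rfl
  · exact Or.inl (self_mem_subterms e)
  · exact Or.inl (self_mem_subterms e)
  · exact Or.inr (self_mem_subterms e)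
  · exact Or.inr (self_mem_subterms e)

theorem litGT_of_dom {L M : Lit F V} {e : Trm F V} (he : e ∈ L.mset)
    (h : ∀ y ∈ M.mset, O.gt e y) : litGT O L M := by
  refine ⟨L.mset, M.mset, 0, (zero_add _).symm, (zero_add _).symm, ?_, ?_⟩
  · intro h0; rw [h0] at he; simp at he
  · exact fun y hy => ⟨e, he, h y hy⟩

theorem neg_mset_comm (a b : Trm F V) : (Lit.neg a b).mset = (Lit.neg b a).mset := by
  have key : ∀ x y : Trm F V,
      (Lit.neg x y).mset = Multiset.replicate 2 x + Multiset.replicate 2 y := by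
    intro x y
    rfl
  rw [key, key, add_comm]

theorem clause_dom {Cg Dg : Clause F V} {L : Lit F V} (hL : L ∈ Cg)
    (h : ∀ M ∈ Dg, litGT O L M) : clauseGT O Cg Dg := by
  refine ⟨Cg, Dg, 0, (zero_add _).symm, (zero_add _).symm, ?_, ?_⟩
  · intro h0; rw [h0] at hL; simp at hL
  · exact fun M hM => ⟨L, hL, h M hM⟩

/-! ### Descend -/

theorem descend (θ : V → Trm F V) (tt : Trm F V) :
    ∀ w : Trm F V, tt ∈ (w.subst θ).subterms →
    ∃ w' ∈ w.subterms, (∃ x, w' = Trm.var x ∧ tt ∈ (θ x).subterms) ∨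
      ((∃ f ts, w' = Trm.app f ts) ∧ w'.subst θ = tt) := by
  refine Trm.ind' (fun x => ?_) (fun f ts ih => ?_)
  · intro h
    rw [subst_var] at h
    exact ⟨Trm.var x, self_mem_subterms _, Or.inl ⟨x, rfl, h⟩⟩
  · intro h
    rw [subst_app] at h
    rcases (mem_subterms_app _ _ _).1 h with heq | ⟨e, he, hte⟩
    · refine ⟨Trm.app f ts, self_mem_subterms _, Or.inr ⟨⟨f, ts, rfl⟩, ?_⟩⟩
      rw [subst_app]; exact heq.symm
    · obtain ⟨s, hs, rfl⟩ := List.mem_map.1 he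
      obtain ⟨w', hw', hgood⟩ := ih s hs hte
      exact ⟨w', (mem_subterms_app _ _ _).2 (Or.inr ⟨s, hs, hw'⟩), hgood⟩

theorem forall2_map {α : Type} {rel : Trm F V → Trm F V → Prop} {g h : α → Trm F V} :
    ∀ (l : List α), (∀ s ∈ l, rel (g s) (h s)) → List.Forall₂ rel (l.map g) (l.map h) := by
  intro l
  induction l with
  | nil => intro _; simp
  | cons a l ih =>
    intro hr
    simp only [List.map_cons]
    exact List.Forall₂.cons (hr a (by simp)) (ih fun s hs => hr s (by simp [hs]))


/-! ### C-side: good element in `nm` -/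

theorem good_elt_var (hE : IsCandidate O T N E) {tt tt' : Trm F V}
    (hrule : (tt, tt') ∈ Rstar E) {Cl : Clause F V} {θ : V → Trm F V} {x : V} {m : ℕ}
    (hlss : (Trm.var x, m) ∈ lss Cl) (hg : (θ x).IsGround)
    (hocc : tt ∈ (θ x).subterms) (hprop : 1 ≤ m ∨ tt ∈ (θ x).psubterms) :
    ∃ p ∈ nm (Rstar E) Cl θ, O.gt p.1 tt ∨ (p.1 = tt ∧ 1 ≤ p.2) := by
  obtain ⟨p, hp, hgood⟩ :=
    rm_contains O hE hrule (rm_spec O (rstar_nice O hE) (θ x) m) hg hocc hprop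
  exact ⟨p, mem_nm_of_lss hlss (by rw [nmElt_var]; exact hp), hgood⟩

theorem good_elt_app (hE : IsCandidate O T N E) {tt tt' : Trm F V}
    (hrule : (tt, tt') ∈ Rstar E) {Cl : Clause F V} {θ : V → Trm F V} {f : F}
    {ts : List (Trm F V)} {m : ℕ} (hlss : (Trm.app f ts, m) ∈ lss Cl)
    (heq : (Trm.app f ts).subst θ = tt) (hm : 1 ≤ m) :
    ∃ p ∈ nm (Rstar E) Cl θ, O.gt p.1 tt ∨ (p.1 = tt ∧ 1 ≤ p.2) := by
  have hnice := rstar_nice O hE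
  have httg := (rstar_mem O hE hrule).2.1
  rw [subst_app] at heq
  have hv : Trm.app f (ts.map fun s => nf (Rstar E) (s.subst θ)) = tt := by
    rw [← heq]
    congr 1
    apply List.map_congr_left
    intro s hs
    apply nf_irred_self O hnice
    apply psub_irred O hE hrule
    rw [← heq, mem_psubterms_app]
    exact ⟨s.subst θ, List.mem_map_of_mem hs, self_mem_subterms _⟩
  obtain ⟨p, hp, hgood⟩ :=
    rm_contains O hE hrule
      (rm_spec O hnice (Trm.app f (ts.map fun s => nf (Rstar E) (s.subst θ))) m)
      (by rw [hv]; exact httg) (by rw [hv]; exact self_mem_subterms tt) (Or.inl hm)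
  exact ⟨p, mem_nm_of_lss hlss (by rw [nmElt_app]; exact hp), hgood⟩

theorem side_helper (hE : IsCandidate O T N E) {tt tt' : Trm F V}
    (hrule : (tt, tt') ∈ Rstar E) {Cl : Clause F V} {θ : V → Trm F V} (a : Trm F V)
    (hlab : ∀ w' ∈ a.subterms, ∃ m, 1 ≤ m ∧ (w', m) ∈ lss Cl)
    (hg : (a.subst θ).IsGround) (hocc : tt ∈ (a.subst θ).subterms) :
    ∃ p ∈ nm (Rstar E) Cl θ, O.gt p.1 tt ∨ (p.1 = tt ∧ 1 ≤ p.2) := by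
  obtain ⟨w', hw', hcase⟩ := descend θ tt a hocc
  obtain ⟨m, hm, hlss⟩ := hlab w' hw'
  rcases hcase with ⟨x, rfl, hx⟩ | ⟨⟨f, ts, rfl⟩, heq⟩
  · have hgx : (θ x).IsGround := by
      have hmem := subst_mem_subterms θ a (Trm.var x) hw'
      rw [subst_var] at hmem
      exact ground_of_mem_subterms _ hg _ hmem
    exact good_elt_var O hE hrule hlss hgx hx (Or.inl hm)
  · exact good_elt_app O hE hrule hlss heq hm

theorem exists_good (hE : IsCandidate O T N E) {tt tt' : Trm F V}
    (hrule : (tt, tt') ∈ Rstar E) {Cl : Clause F V} {θ : V → Trm F V}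
    (hgC : Clause.IsGround (Clause.subst θ Cl))
    (hocc : tt ∈ ssN (Clause.subst θ Cl) ∪ ssPp (Clause.subst θ Cl)) :
    ∃ p ∈ nm (Rstar E) Cl θ, O.gt p.1 tt ∨ (p.1 = tt ∧ 1 ≤ p.2) := by
  rcases Finset.mem_union.1 hocc with h | h
  · obtain ⟨Lg, hLg, hin⟩ := mem_ssN.1 h
    obtain ⟨L, hL, rfl⟩ := Multiset.mem_map.1 hLg
    cases L with
    | pos a b => rw [lit_subst_pos] at hin; simp [Lit.negSubs] at hin
    | neg a b =>
      obtain ⟨hga, hgb⟩ : (a.subst θ).IsGround ∧ (b.subst θ).IsGround := hgC _ hLg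
      rw [lit_subst_neg] at hin
      simp only [Lit.negSubs, Finset.mem_union] at hin
      rcases hin with hin | hin
      · refine side_helper O hE hrule a (fun w' hw' => ⟨2, by omega, lss_of_ssN
          (mem_ssN.2 ⟨Lit.neg a b, hL, ?_⟩)⟩) hga hin
        simp only [Lit.negSubs, Finset.mem_union]
        exact Or.inl hw'
      · refine side_helper O hE hrule b (fun w' hw' => ⟨2, by omega, lss_of_ssN
          (mem_ssN.2 ⟨Lit.neg a b, hL, ?_⟩)⟩) hgb hin
        simp only [Lit.negSubs, Finset.mem_union]
        exact Or.inr hw'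
  · obtain ⟨Lg, hLg, hin⟩ := mem_ssPp.1 h
    obtain ⟨L, hL, rfl⟩ := Multiset.mem_map.1 hLg
    cases L with
    | neg a b => rw [lit_subst_neg] at hin; simp [Lit.posPSubs] at hin
    | pos a b =>
      obtain ⟨hga, hgb⟩ : (a.subst θ).IsGround ∧ (b.subst θ).IsGround := hgC _ hLg
      rw [lit_subst_pos] at hin
      simp only [Lit.posPSubs, Finset.mem_union] at hin
      have main : ∀ c : Trm F V, c ∈ tsP Cl → (∀ w' ∈ c.psubterms, w' ∈ ssPp Cl) →
          (c.subst θ).IsGround → tt ∈ (c.subst θ).psubterms →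
          ∃ p ∈ nm (Rstar E) Cl θ, O.gt p.1 tt ∨ (p.1 = tt ∧ 1 ≤ p.2) := by
        intro c htsPc hssPpc hgc hinc
        cases c with
        | var x =>
          obtain ⟨m, hlss⟩ := lss_of_tsP htsPc
          rw [subst_var] at hgc hinc
          exact good_elt_var O hE hrule hlss hgc
            (psubterms_subset_subterms hinc) (Or.inr hinc)
        | app f ts =>
          rw [subst_app] at hinc
          obtain ⟨e, he, hte⟩ := (mem_psubterms_app _ _ _).1 hinc
          obtain ⟨s, hs, rfl⟩ := List.mem_map.1 he
          have hgs : (s.subst θ).IsGround := by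
            apply ground_of_mem_subterms _ hgc
            rw [subst_app]
            exact (mem_subterms_app _ _ _).2
              (Or.inr ⟨s.subst θ, List.mem_map_of_mem hs, self_mem_subterms _⟩)
          refine side_helper O hE hrule s (fun w' hw' => ?_) hgs hte
          exact lss_of_ssPp (hssPpc w' ((mem_psubterms_app _ _ _).2 ⟨s, hs, hw'⟩))
      rcases hin with hin | hin
      · refine main a (mem_tsP.2 ⟨Lit.pos a b, hL, by simp [Lit.posTops]⟩)
          (fun w' hw' => mem_ssPp.2 ⟨Lit.pos a b, hL, ?_⟩) hga hin
        simp only [Lit.posPSubs, Finset.mem_union]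
        exact Or.inl hw'
      · refine main b (mem_tsP.2 ⟨Lit.pos a b, hL, by simp [Lit.posTops]⟩)
          (fun w' hw' => mem_ssPp.2 ⟨Lit.pos a b, hL, ?_⟩) hgb hin
        simp only [Lit.posPSubs, Finset.mem_union]
        exact Or.inr hw'


/-! ### D-side bound -/

theorem nmD_bound (hE : IsCandidate O T N E) {tt tt' : Trm F V}
    (hrule : (tt, tt') ∈ Rstar E) {Dcl : Clause F V} {θ : V → Trm F V}
    (hgD : Clause.IsGround (Clause.subst θ Dcl))
    (hmax : StrictMaxTermPos O (Clause.subst θ Dcl) tt) :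
    ∀ p ∈ nm (Rstar E) Dcl θ, O.gt tt p.1 ∨ (p.1 = tt ∧ p.2 = 0) := by
  have hnice := rstar_nice O hE
  obtain ⟨hmax1, hmax2, hmax3, -⟩ := hmax
  intro p hp
  rcases nm_cases hp with ⟨⟨w, m⟩, hlss, helt⟩ | ⟨⟨w, m⟩, hlts, rfl⟩
  · obtain ⟨hwmem, hlab0⟩ := lss_cases hlss
    have hwall : w.subst θ ∈ allSub (Clause.subst θ Dcl) := by
      apply union4_subst_allSub _ θ
      tauto
    have hwg : (w.subst θ).IsGround := allSub_ground hgD hwall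
    have hwle : ge' O tt (w.subst θ) := hmax1 _ hwall
    have hlabel : w.subst θ = tt → m = 0 := by
      intro hwt
      refine hlab0 (fun hn => hmax2 ?_) (fun hp' => hmax3 ?_)
      · exact hwt ▸ ssN_subst hn θ
      · exact hwt ▸ ssPp_subst hp' θ
    cases w with
    | var x =>
      rw [nmElt_var] at helt
      rw [subst_var] at hwle hwg hlabel
      have hb := rm_bound O hnice (rm_spec O hnice (θ x) m) hwg p helt
      rcases hb with hb | ⟨hb1, hb2⟩
      · rcases hwle with heq | hgt
        · exact Or.inl (heq ▸ hb)
        · exact Or.inl (O.trans hgt hb)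
      · rcases hwle with heq | hgt
        · exact Or.inr ⟨hb1.trans heq, hb2.trans (hlabel heq)⟩
        · exact Or.inl (hb1 ▸ hgt)
    | app f ts =>
      rw [nmElt_app] at helt
      set v := Trm.app f (ts.map fun s => nf (Rstar E) (s.subst θ)) with hvdef
      have hargg : ∀ s ∈ ts, (s.subst θ).IsGround := by
        intro s hs
        apply ground_of_mem_subterms _ hwg
        rw [subst_app]
        exact (mem_subterms_app _ _ _).2
          (Or.inr ⟨s.subst θ, List.mem_map_of_mem hs, self_mem_subterms _⟩)
      have hvg : v.IsGround := by
        refine Trm.IsGround.app fun e he => ?_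
        obtain ⟨s, hs, rfl⟩ := List.mem_map.1 he
        exact nf_ground O hnice (hargg s hs)
      have hvle : ge' O ((Trm.app f ts).subst θ) v := by
        rw [subst_app]
        have h2 := app_mono O f (ts.map (Trm.subst θ))
          (ts.map fun s => nf (Rstar E) (s.subst θ)) []
          (forall2_map ts fun s _ => nf_ge O hnice (s.subst θ))
        simpa using h2
      have hb := rm_bound O hnice (rm_spec O hnice v m) hvg p helt
      have hple : ge' O v p.1 := by
        rcases hb with hb | ⟨hb1, _⟩
        · exact Or.inr hb
        · exact Or.inl hb1
      have httv : ge' O tt v := ge'_trans O hwle hvle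
      by_cases hpt : p.1 = tt
      · have hveq : v = tt := ge'_top O hple httv hpt
        have hweq : (Trm.app f ts).subst θ = tt := ge'_top O hvle hwle hveq
        have hm : p.2 = m := by
          rcases hb with hb | ⟨-, hb2⟩
          · rw [hpt, ← hveq] at hb
            exact absurd hb (Ogt_irrefl O v)
          · exact hb2
        exact Or.inr ⟨hpt, hm.trans (hlabel hweq)⟩
      · rcases ge'_trans O httv hple with heq | hgt
        · exact absurd heq hpt
        · exact Or.inl hgt
  · have hwall : w.subst θ ∈ allSub (Clause.subst θ Dcl) := by
      apply union4_subst_allSub _ θ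
      rcases lts_cases hlts with h | h
      · tauto
      · tauto
    have hwle : ge' O tt (w.subst θ) := hmax1 _ hwall
    have hnfle : ge' O (w.subst θ) (nf (Rstar E) (w.subst θ)) := nf_ge O hnice _
    left
    have hne : nf (Rstar E) (w.subst θ) ≠ tt := by
      intro hnf
      have hweq : w.subst θ = tt := ge'_top O hnfle hwle hnf
      have hirr : Irred (Rstar E) tt := by
        have := nf_irred O hnice (w.subst θ)
        rwa [hnf] at this
      exact hirr tt' ⟨tt, true, RewAt.root hrule⟩
    rcases ge'_trans O hwle hnfle with heq | hgt
    · exact absurd heq hne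
    · exact hgt

/-! ### Literal comparison for the clause ordering -/

theorem litGT_neg_tt {tt s2 : Trm F V} {M : Lit F V}
    (hMb : ∀ y ∈ M.mset, y = tt ∨ O.gt tt y)
    (hMneg : ∀ a b : Trm F V, M = Lit.neg a b → ∀ y ∈ M.mset, O.gt tt y) :
    litGT O (Lit.neg tt s2) M := by
  have htmem : tt ∈ (Lit.neg tt s2).mset := by simp [Lit.mset]
  cases M with
  | neg a b => exact litGT_of_dom O htmem (hMneg a b rfl)
  | pos a b =>
    have ha := hMb a (by simp [Lit.mset])
    have hb := hMb b (by simp [Lit.mset])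
    rcases ha with ha | ha
    · rcases hb with hb | hb
      · refine ⟨{s2, s2}, 0, {tt, tt}, rfl, ?_, by simp, by simp⟩
        show ({a, b} : Multiset (Trm F V)) = {tt, tt} + 0
        rw [ha, hb]
        exact (add_zero _).symm
      · refine ⟨{tt, s2, s2}, {b}, {tt}, rfl, ?_, by simp, ?_⟩
        · show ({a, b} : Multiset (Trm F V)) = {tt} + {b}
          rw [ha]
          rfl
        · intro y hy
          rw [Multiset.mem_singleton] at hy
          subst hy
          exact ⟨tt, by simp, hb⟩
    · rcases hb with hb | hb
      · refine ⟨{tt, s2, s2}, {a}, {tt}, rfl, ?_, by simp, ?_⟩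
        · show ({a, b} : Multiset (Trm F V)) = {tt} + {a}
          rw [hb]
          show (a ::ₘ {tt} : Multiset (Trm F V)) = {tt} + {a}
          rw [show ({tt} : Multiset (Trm F V)) = tt ::ₘ 0 from rfl, Multiset.cons_swap]
          rfl
        · intro y hy
          rw [Multiset.mem_singleton] at hy
          subst hy
          exact ⟨tt, by simp, ha⟩
      · refine litGT_of_dom O htmem ?_
        intro y hy
        simp only [Lit.mset, Multiset.insert_eq_cons, Multiset.mem_cons,
          Multiset.mem_singleton] at hy
        rcases hy with rfl | rfl
        · exact ha
        · exact hb

end Aux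


/-- Lemma 9: if `(D·θ) = (D' ∨ t ≈ t' · θ)` produces the rule
`tθ → t'θ` of `R_*` and `tθ` occurs in `Cθ` in a negative literal or below the top
of a term in a positive literal, then `(D·θ) ≪_{R_*} (C·θ)` and `Dθ ≺_C Cθ`. -/
theorem productive_smaller_neg {F V : Type} (O : ReductionOrdering F V)
    (T : TieBreak F V) (N : Set (Closure F V))
    (E : Trm F V → Set (Trm F V × Trm F V)) (hE : IsCandidate O T N E)
    (D' C : Clause F V) (t t' : Trm F V) (θ : V → Trm F V)
    (hC : (C, θ) ∈ N) (hgC : Closure.IsGround (C, θ))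
    (hprod : ProducesRule O T N E D' t t' θ)
    (hocc : t.subst θ ∈ ssN (Clause.subst θ C) ∪ ssPp (Clause.subst θ C)) :
    cloGT O T (Rstar E) (C, θ) (D' + {Lit.pos t t'}, θ) ∧
    clauseGT O (Clause.subst θ C) (Clause.subst θ (D' + {Lit.pos t t'})) := by
  classical
  obtain ⟨hPF, hEr⟩ := hprod
  obtain ⟨-, hPC, -⟩ := hPF
  obtain ⟨hN', hgDc, hmax, hirr, hnm', hgtt⟩ := hPC
  have hrule : (t.subst θ, t'.subst θ) ∈ Rstar E := ⟨t.subst θ, by rw [hEr]; rfl⟩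
  have hgCθ : Clause.IsGround (Clause.subst θ C) := hgC
  have hgDθ : Clause.IsGround (Clause.subst θ (D' + {Lit.pos t t'})) := hgDc
  obtain ⟨hmax1, hmax2, hmax3, hmax4⟩ := hmax
  have hMb : ∀ M ∈ Clause.subst θ (D' + {Lit.pos t t'}), ∀ y ∈ M.mset,
      y = t.subst θ ∨ O.gt (t.subst θ) y := by
    intro M hM y hy
    exact hmax1 y (mem_allSub.2 ⟨M, hM, mset_subset_allSubs hy⟩)
  have hMneg : ∀ M ∈ Clause.subst θ (D' + {Lit.pos t t'}), ∀ a b : Trm F V,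
      M = Lit.neg a b → ∀ y ∈ M.mset, O.gt (t.subst θ) y := by
    intro M hM a b hMeq y hy
    rcases hMb M hM y hy with heq | h
    · exfalso
      apply hmax2
      rw [← heq]
      subst hMeq
      exact mem_ssN.2 ⟨Lit.neg a b, hM, mset_neg_negSubs hy⟩
    · exact h
  have strictdom : ∀ (L : Lit F V) (s : Trm F V), s ∈ L.mset → O.gt s (t.subst θ) →
      ∀ M ∈ Clause.subst θ (D' + {Lit.pos t t'}), litGT O L M := by
    intro L s hsm hsgt M hM
    refine litGT_of_dom O hsm (fun y hy => ?_)
    rcases hMb M hM y hy with heq | hlt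
    · rw [heq]; exact hsgt
    · exact O.trans hsgt hlt
  have hlit : ∃ L ∈ Clause.subst θ C,
      ∀ M ∈ Clause.subst θ (D' + {Lit.pos t t'}), litGT O L M := by
    rcases Finset.mem_union.1 hocc with h | h
    · obtain ⟨Lg, hLg, hin⟩ := mem_ssN.1 h
      cases Lg with
      | pos a b => simp [Lit.negSubs] at hin
      | neg s1 s2 =>
        obtain ⟨hg1, hg2⟩ : s1.IsGround ∧ s2.IsGround := hgCθ _ hLg
        refine ⟨Lit.neg s1 s2, hLg, ?_⟩
        simp only [Lit.negSubs, Finset.mem_union] at hin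
        rcases hin with hin | hin
        · rcases subterm_ge O hg1 hin with heq | hgt
          · intro M hM
            rw [← heq]
            exact litGT_neg_tt O (hMb M hM) (fun a b hab => hMneg M hM a b hab)
          · exact strictdom _ s1 (by simp [Lit.mset]) hgt
        · rcases subterm_ge O hg2 hin with heq | hgt
          · intro M hM
            have hswap : litGT O (Lit.neg (t.subst θ) s1) M :=
              litGT_neg_tt O (hMb M hM) (fun a b hab => hMneg M hM a b hab)
            unfold litGT at hswap ⊢
            rw [← heq, neg_mset_comm]
            exact hswap
          · exact strictdom _ s2 (by simp [Lit.mset]) hgt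
    · obtain ⟨Lg, hLg, hin⟩ := mem_ssPp.1 h
      cases Lg with
      | neg s1 s2 => simp [Lit.posPSubs] at hin
      | pos s1 s2 =>
        obtain ⟨hg1, hg2⟩ : s1.IsGround ∧ s2.IsGround := hgCθ _ hLg
        refine ⟨Lit.pos s1 s2, hLg, ?_⟩
        simp only [Lit.posPSubs, Finset.mem_union] at hin
        rcases hin with hin | hin
        · exact strictdom _ s1 (by simp [Lit.mset]) (psubterm_gt O s1 hg1 _ hin)
        · exact strictdom _ s2 (by simp [Lit.mset]) (psubterm_gt O s2 hg2 _ hin)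
  obtain ⟨L, hL, hLM⟩ := hlit
  constructor
  · left
    obtain ⟨x, hx, hxgood⟩ := exists_good O hE hrule hgCθ hocc
    refine ⟨nm (Rstar E) C θ, nm (Rstar E) (D' + {Lit.pos t t'}) θ, 0,
      (zero_add _).symm, (zero_add _).symm, ?_, ?_⟩
    · intro h0; rw [h0] at hx; simp at hx
    · intro y hy
      refine ⟨x, hx, ?_⟩
      have hyb := nmD_bound O hE hrule hgDθ ⟨hmax1, hmax2, hmax3, hmax4⟩ y hy
      rcases hxgood with hxg | ⟨hx1, hx2⟩
      · rcases hyb with hyl | ⟨hy1, hy2⟩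
        · exact Or.inl (O.trans hxg hyl)
        · exact Or.inl (by rw [hy1]; exact hxg)
      · rcases hyb with hyl | ⟨hy1, hy2⟩
        · exact Or.inl (by rw [hx1]; exact hyl)
        · exact Or.inr ⟨hx1.trans hy1.symm, by omega⟩
  · exact clause_dom O hL hLM
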